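/- arXiv:0905.3052 — 5 statements merged into one kernel-verified Lean document; each statement's English description precedes it below -/
import Mathlib

section
/- Let F be a fractal subset of [0,1] with complementary intervals (I_n). Then inf{ s > 0 : Σ_{n=1}^∞ |I_n|^s < ∞ } = 1 − liminf_{r→0⁺} log L(F_r) / log r, where L denotes Lebesgue measure on ℝ and F_r = { x ∈ ℝ : dist(x,F) ≤ r } is the closed r-neighbourhood of F. (That is, the abscissa of convergence of the series Σ |I_n|^s equals the upper Minkowski (box-counting) dimension of F.) -/
open MeasureTheory Filter Set
open scoped Classical

noncomputable section

/-- The enlargement `B̄^a` of the interval `[s,t]` by the factor `1+a` about its centre. -/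
def enlarge (a s t : ℝ) : Set ℝ :=
  Set.Icc (s - a * (t - s) / 2) (t + a * (t - s) / 2)

/-- The moment sum `Σ_{B ∈ B_r^*} μ(B̄^a)^q` over grid intervals of length `r`
whose interior meets the support of `μ` (i.e. with `μ(B) > 0`). -/
def gridSum (μ : Measure ℝ) (a q R : ℝ) : ℝ :=
  ∑' m : ℤ, if 0 < μ (Set.Icc ((m : ℝ) * R) (((m : ℝ) + 1) * R))
    then (μ (enlarge a ((m : ℝ) * R) (((m : ℝ) + 1) * R))).toReal ^ q else 0

/-- The coarse multifractal moment function
`β_a(q) = inf{β : limsup_{r→0⁺} r^β Σ_{B ∈ B_r^*} μ(B̄^a)^q = 0}`.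
(For the nonnegative quantity `r^β · Σ…`, vanishing of the `limsup` as `r → 0⁺`
is the same as convergence to `0`.) -/
def betaA (μ : Measure ℝ) (a q : ℝ) : ℝ :=
  sInf {β : ℝ | Filter.Tendsto (fun R => R ^ β * gridSum μ a q R)
    (nhdsWithin 0 (Set.Ioi 0)) (nhds 0)}

/-- `F` is a "fractal subset" of `[0,1]`: compact, Lebesgue-null, containing `0` and `1`. -/
def IsFractalSubset (F : Set ℝ) : Prop :=
  IsCompact F ∧ F ⊆ Set.Icc 0 1 ∧ (0 : ℝ) ∈ F ∧ (1 : ℝ) ∈ F ∧ MeasureTheory.volume F = 0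

/-- The complementary intervals `I_n = (l n, r n)` of `F` in `[0,1]`, enumerated with
nonincreasing lengths. -/
structure FractalComplement (F : Set ℝ) where
  l : ℕ → ℝ
  r : ℕ → ℝ
  lt : ∀ n, l n < r n
  disj : Pairwise fun n m => Disjoint (Set.Ioo (l n) (r n)) (Set.Ioo (l m) (r m))
  union : (⋃ n, Set.Ioo (l n) (r n)) = Set.Icc (0 : ℝ) 1 \ F
  mono : ∀ n, r (n + 1) - l (n + 1) ≤ r n - l n

/-- The length `|I_n|` of the `n`-th complementary interval. -/
def FractalComplement.len {F : Set ℝ} (c : FractalComplement F) (n : ℕ) : ℝ := c.r n - c.l n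

/-- The enlargement `Ī_n^a` of the closure of the complementary interval `I_n`. -/
def FractalComplement.I {F : Set ℝ} (c : FractalComplement F) (a : ℝ) (n : ℕ) : Set ℝ :=
  enlarge a (c.l n) (c.r n)

/-- The lacunarity condition with constant `lam`: every interval `[x-r, x+r]` with `x ∈ F`
and `0 < r ≤ 1` contains a complementary interval of length at least `lam * r`. -/
def Lacunary {F : Set ℝ} (c : FractalComplement F) (lam : ℝ) : Prop :=
  ∀ x ∈ F, ∀ R : ℝ, 0 < R → R ≤ 1 → ∃ n,
    Set.Ioo (c.l n) (c.r n) ⊆ Set.Icc (x - R) (x + R) ∧ lam * R ≤ c.len n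

/-- The topological support of `μ` is exactly `F`. -/
def HasSupport (μ : Measure ℝ) (F : Set ℝ) : Prop :=
  μ Fᶜ = 0 ∧ ∀ x ∈ F, ∀ ε : ℝ, 0 < ε → 0 < μ (Set.Ioo (x - ε) (x + ε))

variable {F : Set ℝ}

lemma Ioo_subset (hF : IsFractalSubset F) (c : FractalComplement F) (n : ℕ) :
    Set.Ioo (c.l n) (c.r n) ⊆ Set.Icc (0:ℝ) 1 \ F := by
  rw [← c.union]; exact Set.subset_iUnion (fun k => Set.Ioo (c.l k) (c.r k)) n

lemma endpoints_mem_Icc (hF : IsFractalSubset F) (c : FractalComplement F) (n : ℕ) :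
    c.l n ∈ Set.Icc (0:ℝ) 1 ∧ c.r n ∈ Set.Icc (0:ℝ) 1 := by
  have h1 : closure (Set.Ioo (c.l n) (c.r n)) ⊆ Set.Icc (0:ℝ) 1 := by
    apply closure_minimal _ isClosed_Icc
    exact (Ioo_subset hF c n).trans (Set.diff_subset)
  rw [closure_Ioo (c.lt n).ne] at h1
  exact ⟨h1 (Set.left_mem_Icc.2 (c.lt n).le), h1 (Set.right_mem_Icc.2 (c.lt n).le)⟩

lemma notMem_other (hF : IsFractalSubset F) (c : FractalComplement F) (n : ℕ) :
    c.l n ∉ (⋃ m, Set.Ioo (c.l m) (c.r m)) ∧ c.r n ∉ (⋃ m, Set.Ioo (c.l m) (c.r m)) := by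
  constructor
  · rintro ⟨_, ⟨m, rfl⟩, hm⟩
    have hne : m ≠ n := by rintro rfl; exact (lt_irrefl _ hm.1)
    obtain ⟨hm1, hm2⟩ := hm
    set w := min (c.r n) (c.r m)
    have hw : c.l n < w := lt_min (c.lt n) hm2
    obtain ⟨z, hz1, hz2⟩ := exists_between hw
    exact (c.disj hne).ne_of_mem ⟨hm1.trans hz1, hz2.trans_le (min_le_right _ _)⟩
      ⟨hz1, hz2.trans_le (min_le_left _ _)⟩ rfl
  · rintro ⟨_, ⟨m, rfl⟩, hm⟩
    have hne : m ≠ n := by rintro rfl; exact (lt_irrefl _ hm.2)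
    obtain ⟨hm1, hm2⟩ := hm
    set w := max (c.l n) (c.l m)
    have hw : w < c.r n := max_lt (c.lt n) hm1
    obtain ⟨z, hz1, hz2⟩ := exists_between hw
    exact (c.disj hne).ne_of_mem ⟨(le_max_right _ _).trans_lt hz1, hz2.trans hm2⟩
      ⟨(le_max_left _ _).trans_lt hz1, hz2⟩ rfl

lemma endpoints_mem (hF : IsFractalSubset F) (c : FractalComplement F) (n : ℕ) :
    c.l n ∈ F ∧ c.r n ∈ F := by
  have h := notMem_other hF c n
  have hIcc := endpoints_mem_Icc hF c n
  rw [c.union] at h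
  constructor
  · by_contra hl; exact h.1 ⟨hIcc.1, hl⟩
  · by_contra hr; exact h.2 ⟨hIcc.2, hr⟩

lemma len_pos (c : FractalComplement F) (n : ℕ) : 0 < c.len n := sub_pos.2 (c.lt n)

lemma len_le_one (hF : IsFractalSubset F) (c : FractalComplement F) (n : ℕ) : c.len n ≤ 1 := by
  have h := endpoints_mem_Icc hF c n
  have : c.r n ≤ 1 := h.2.2
  have : (0:ℝ) ≤ c.l n := h.1.1
  unfold FractalComplement.len; linarith [h.2.2, h.1.1]

lemma len_antitone (c : FractalComplement F) : Antitone c.len := by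
  apply antitone_nat_of_succ_le
  intro n; exact c.mono n

lemma measurable_union (c : FractalComplement F) (a b : ℕ → ℝ) :
    MeasurableSet (⋃ n, Set.Ioo (a n) (b n)) :=
  MeasurableSet.iUnion (fun n => measurableSet_Ioo)

lemma tsum_len (hF : IsFractalSubset F) (c : FractalComplement F) :
    Summable c.len ∧ ∑' n, c.len n = 1 := by
  have hvol : volume (⋃ n, Set.Ioo (c.l n) (c.r n)) = 1 := by
    rw [c.union, measure_diff_null hF.2.2.2.2]
    simp [Real.volume_Icc]
  rw [measure_iUnion (fun n m hnm => c.disj hnm) (fun n => measurableSet_Ioo)] at hvol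
  simp only [Real.volume_Ioo] at hvol
  have hfin : ∀ n, ENNReal.ofReal (c.r n - c.l n) ≠ ⊤ := fun n => ENNReal.ofReal_ne_top
  have hsum_ne : (∑' n, ENNReal.ofReal (c.r n - c.l n)) ≠ ⊤ := by rw [hvol]; exact ENNReal.one_ne_top
  have hsummable : Summable (fun n => (ENNReal.ofReal (c.r n - c.l n)).toReal) :=
    ENNReal.summable_toReal hsum_ne
  have heq : ∀ n, (ENNReal.ofReal (c.r n - c.l n)).toReal = c.len n := fun n =>
    ENNReal.toReal_ofReal (sub_pos.2 (c.lt n)).le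
  constructor
  · exact hsummable.congr heq
  · have := ENNReal.tsum_toReal_eq hfin
    rw [hvol] at this
    simp only [ENNReal.toReal_one] at this
    rw [← tsum_congr heq, ← this]

lemma cthickening_eq (hF : IsFractalSubset F) (c : FractalComplement F) {R : ℝ} (hR : 0 < R) :
    Metric.cthickening R F =
      Set.Icc (-R) (1+R) \ ⋃ n, Set.Ioo (c.l n + R) (c.r n - R) := by
  ext x
  constructor
  · intro hx
    rw [Metric.mem_cthickening_iff] at hx
    have hFne : F.Nonempty := ⟨0, hF.2.2.1⟩
    obtain ⟨y, hyF, hyd⟩ := hF.1.exists_infDist_eq_dist hFne x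
    have hdist : dist x y ≤ R := by
      rw [← hyd]
      have : Metric.infDist x F = (EMetric.infEdist x F).toReal := rfl
      rw [this]
      calc (EMetric.infEdist x F).toReal ≤ (ENNReal.ofReal R).toReal :=
            ENNReal.toReal_mono ENNReal.ofReal_ne_top hx
        _ = R := ENNReal.toReal_ofReal hR.le
    have hy01 : y ∈ Set.Icc (0:ℝ) 1 := hF.2.1 hyF
    rw [Real.dist_eq, abs_le] at hdist
    constructor
    · constructor <;> [linarith [hy01.1]; linarith [hy01.2]]
    · rintro ⟨_, ⟨n, rfl⟩, hxn⟩
      have hyn : y ∉ Set.Ioo (c.l n) (c.r n) := fun hy => ((Ioo_subset hF c n) hy).2 hyF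
      rw [Set.mem_Ioo, not_and_or, not_lt, not_lt] at hyn
      rcases hyn with h | h
      · linarith [hxn.1]
      · linarith [hxn.2]
  · rintro ⟨⟨hx1, hx2⟩, hx3⟩
    rcases le_or_gt x 0 with h0 | h0
    · exact Metric.mem_cthickening_of_dist_le x 0 R F hF.2.2.1
        (by rw [Real.dist_eq]; rw [abs_of_nonpos (by linarith)]; linarith)
    rcases le_or_gt 1 x with h1 | h1
    · exact Metric.mem_cthickening_of_dist_le x 1 R F hF.2.2.2.1
        (by rw [Real.dist_eq]; rw [abs_of_nonneg (by linarith)]; linarith)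
    by_cases hxF : x ∈ F
    · exact Metric.self_subset_cthickening F hxF
    have hxU : x ∈ ⋃ n, Set.Ioo (c.l n) (c.r n) := by
      rw [c.union]; exact ⟨⟨h0.le, h1.le⟩, hxF⟩
    obtain ⟨_, ⟨n, rfl⟩, hxn⟩ := hxU
    have hnot : x ∉ Set.Ioo (c.l n + R) (c.r n - R) := fun h => hx3 (Set.mem_iUnion.2 ⟨n, h⟩)
    rw [Set.mem_Ioo, not_and_or, not_lt, not_lt] at hnot
    rcases hnot with h | h
    · exact Metric.mem_cthickening_of_dist_le x (c.l n) R F (endpoints_mem hF c n).1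
        (by rw [Real.dist_eq, abs_of_nonneg (by linarith [hxn.1])]; linarith)
    · exact Metric.mem_cthickening_of_dist_le x (c.r n) R F (endpoints_mem hF c n).2
        (by rw [Real.dist_eq, abs_of_nonpos (by linarith [hxn.2])]; linarith)

lemma summable_min (hF : IsFractalSubset F) (c : FractalComplement F) {t : ℝ} (ht : 0 < t) :
    Summable (fun n => min (c.len n) t) :=
  (tsum_len hF c).1.of_nonneg_of_le (fun n => le_min (len_pos c n).le ht.le)
    (fun n => min_le_left _ _)

lemma summable_max (hF : IsFractalSubset F) (c : FractalComplement F) {t : ℝ} (ht : 0 ≤ t) :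
    Summable (fun n => max (c.len n - t) 0) :=
  (tsum_len hF c).1.of_nonneg_of_le (fun n => le_max_right _ _)
    (fun n => max_le (by linarith) (len_pos c n).le)

lemma vol_formula (hF : IsFractalSubset F) (c : FractalComplement F) {R : ℝ} (hR : 0 < R) :
    (volume (Metric.cthickening R F)).toReal = 2*R + ∑' n, min (c.len n) (2*R) := by
  rw [cthickening_eq hF c hR]
  have hsub : (⋃ n, Set.Ioo (c.l n + R) (c.r n - R)) ⊆ Set.Icc (-R) (1+R) := by
    refine Set.iUnion_subset fun n x hx => ?_
    obtain ⟨hx1, hx2⟩ := hx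
    have h := (Ioo_subset hF c n) (⟨by linarith, by linarith⟩ : x ∈ Set.Ioo (c.l n) (c.r n))
    exact ⟨by linarith [h.1.1], by linarith [h.1.2]⟩
  have hdisj : Pairwise fun n m =>
      Disjoint (Set.Ioo (c.l n + R) (c.r n - R)) (Set.Ioo (c.l m + R) (c.r m - R)) := by
    intro n m hnm
    exact (c.disj hnm).mono (Set.Ioo_subset_Ioo (by linarith) (by linarith))
      (Set.Ioo_subset_Ioo (by linarith) (by linarith))
  have hmeasU : volume (⋃ n, Set.Ioo (c.l n + R) (c.r n - R))
      = ∑' n, ENNReal.ofReal (c.len n - 2*R) := by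
    rw [measure_iUnion (fun n m hnm => hdisj hnm) (fun n => measurableSet_Ioo)]
    congr 1; funext n; rw [Real.volume_Ioo]; congr 1; unfold FractalComplement.len; ring
  have hfinU : (∑' n, ENNReal.ofReal (c.len n - 2*R)) ≤ 1 := by
    calc (∑' n, ENNReal.ofReal (c.len n - 2*R)) ≤ ∑' n, ENNReal.ofReal (c.len n) :=
          ENNReal.tsum_le_tsum (fun n => ENNReal.ofReal_le_ofReal (by linarith))
      _ = 1 := by
          have := (tsum_len hF c)
          rw [← ENNReal.ofReal_tsum_of_nonneg (fun n => (len_pos c n).le) this.1, this.2,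
            ENNReal.ofReal_one]
  have hdiff : volume (Set.Icc (-R) (1+R) \ ⋃ n, Set.Ioo (c.l n + R) (c.r n - R))
      = ENNReal.ofReal (1+2*R) - ∑' n, ENNReal.ofReal (c.len n - 2*R) := by
    rw [measure_diff hsub ((measurable_union c _ _).nullMeasurableSet)
      (by rw [hmeasU]; exact (hfinU.trans_lt ENNReal.one_lt_top).ne),
      hmeasU, Real.volume_Icc]
    congr 1; congr 1; ring
  rw [hdiff]
  have hT : (∑' n, ENNReal.ofReal (c.len n - 2*R)).toReal = ∑' n, max (c.len n - 2*R) 0 := by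
    rw [ENNReal.tsum_toReal_eq (fun n => ENNReal.ofReal_ne_top)]
    exact tsum_congr (fun n => ENNReal.toReal_ofReal')
  rw [ENNReal.toReal_sub_of_le (hfinU.trans (by simp [ENNReal.one_le_ofReal]; linarith))
    ENNReal.ofReal_ne_top, hT, ENNReal.toReal_ofReal (by linarith)]
  have hsplit : ∀ n, min (c.len n) (2*R) = c.len n - max (c.len n - 2*R) 0 := by
    intro n
    rcases le_or_gt (c.len n) (2*R) with h | h
    · rw [min_eq_left h, max_eq_right (by linarith)]; ring
    · rw [min_eq_right h.le, max_eq_left (by linarith)]; ring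
  rw [tsum_congr hsplit, Summable.tsum_sub (tsum_len hF c).1 (summable_max hF c (by linarith : (0:ℝ) ≤ 2*R)),
    (tsum_len hF c).2]
  ring

lemma vol_lb (hF : IsFractalSubset F) (c : FractalComplement F) {R : ℝ} (hR : 0 < R) :
    2*R ≤ (volume (Metric.cthickening R F)).toReal := by
  rw [vol_formula hF c hR]
  have : 0 ≤ ∑' n, min (c.len n) (2*R) :=
    tsum_nonneg (fun n => le_min (len_pos c n).le (by linarith))
  linarith

lemma vol_ub (hF : IsFractalSubset F) (c : FractalComplement F) {R : ℝ} (hR : 0 < R) :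
    (volume (Metric.cthickening R F)).toReal ≤ 1 + 2*R := by
  rw [vol_formula hF c hR]
  have : ∑' n, min (c.len n) (2*R) ≤ ∑' n, c.len n :=
    Summable.tsum_le_tsum (fun n => min_le_left _ _) (summable_min hF c (by linarith)) (tsum_len hF c).1
  rw [(tsum_len hF c).2] at this
  linarith

/-- Lower bound: `(k+1) * len k ≤ vol(F_{len k / 2})`. -/
lemma count_lb (hF : IsFractalSubset F) (c : FractalComplement F) (k : ℕ) :
    ((k:ℝ)+1) * c.len k ≤ (volume (Metric.cthickening (c.len k / 2) F)).toReal := by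
  have hpos : 0 < c.len k / 2 := by linarith [len_pos c k]
  rw [vol_formula hF c hpos]
  have h2 : 2 * (c.len k / 2) = c.len k := by ring
  rw [h2]
  have hsum : ∑ n ∈ Finset.range (k+1), min (c.len n) (c.len k)
      ≤ ∑' n, min (c.len n) (c.len k) :=
    Summable.sum_le_tsum _ (fun n _ => le_min (len_pos c n).le (len_pos c k).le)
      (summable_min hF c (len_pos c k))
  have heq : ∑ n ∈ Finset.range (k+1), min (c.len n) (c.len k) = ((k:ℝ)+1) * c.len k := by
    rw [Finset.sum_congr rfl (fun n hn => min_eq_right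
      (len_antitone c (Nat.lt_succ_iff.1 (Finset.mem_range.1 hn))))]
    rw [Finset.sum_const, Finset.card_range, nsmul_eq_mul]
    push_cast; ring
  rw [← heq]
  calc ∑ n ∈ Finset.range (k+1), min (c.len n) (c.len k) ≤ ∑' n, min (c.len n) (c.len k) := hsum
    _ ≤ c.len k + ∑' n, min (c.len n) (c.len k) := by linarith [len_pos c k]

/-- Upper bound from summability of moments. -/
lemma vol_moment_ub (hF : IsFractalSubset F) (c : FractalComplement F) {s R : ℝ}
    (hs0 : 0 < s) (hs1 : s ≤ 1) (hsum : Summable (fun n => c.len n ^ s))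
    (hR : 0 < R) (hR2 : 2*R ≤ 1) :
    (volume (Metric.cthickening R F)).toReal ≤ (2*R)^(1-s) * (1 + ∑' n, c.len n ^ s) := by
  rw [vol_formula hF c hR]
  have h2R : (0:ℝ) < 2*R := by linarith
  have hmin : ∀ n, min (c.len n) (2*R) ≤ (2*R)^(1-s) * c.len n ^ s := by
    intro n
    have hmp : 0 < min (c.len n) (2*R) := lt_min (len_pos c n) h2R
    calc min (c.len n) (2*R) = min (c.len n) (2*R) ^ (1-s) * min (c.len n) (2*R) ^ s := by
          rw [← Real.rpow_add hmp]; norm_num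
      _ ≤ (2*R)^(1-s) * c.len n ^ s := by
          apply mul_le_mul
          · exact Real.rpow_le_rpow hmp.le (min_le_right _ _) (by linarith)
          · exact Real.rpow_le_rpow hmp.le (min_le_left _ _) hs0.le
          · exact Real.rpow_nonneg hmp.le _
          · exact Real.rpow_nonneg h2R.le _
  have hsum2 : ∑' n, min (c.len n) (2*R) ≤ (2*R)^(1-s) * ∑' n, c.len n ^ s := by
    rw [← tsum_mul_left]
    exact Summable.tsum_le_tsum hmin (summable_min hF c h2R) (hsum.mul_left _)
  have h2r1 : 2*R ≤ (2*R)^(1-s) := by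
    calc 2*R = (2*R)^(1:ℝ) := (Real.rpow_one _).symm
      _ ≤ (2*R)^(1-s) := Real.rpow_le_rpow_of_exponent_ge h2R (by linarith) (by linarith)
  have hC : 0 ≤ ∑' n, c.len n ^ s := tsum_nonneg (fun n => Real.rpow_nonneg (len_pos c n).le _)
  calc 2*R + ∑' n, min (c.len n) (2*R) ≤ (2*R)^(1-s) + (2*R)^(1-s) * ∑' n, c.len n ^ s := by
        linarith
    _ = (2*R)^(1-s) * (1 + ∑' n, c.len n ^ s) := by ring

/-- The quotient `log vol(F_R) / log R`. -/
def qfun (F : Set ℝ) (R : ℝ) : ℝ :=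
  Real.log ((volume (Metric.cthickening R F)).toReal) / Real.log R

lemma qfun_bounds (hF : IsFractalSubset F) (c : FractalComplement F) {R : ℝ}
    (hR : 0 < R) (hR2 : R < 1/2) :
    Real.log 2 / Real.log R ≤ qfun F R ∧ qfun F R ≤ 1 := by
  have hlogR : Real.log R < 0 := Real.log_neg hR (by linarith)
  have hG1 : 2*R ≤ (volume (Metric.cthickening R F)).toReal := vol_lb hF c hR
  have hG2 : (volume (Metric.cthickening R F)).toReal ≤ 2 := by
    linarith [vol_ub hF c hR]
  have hGpos : 0 < (volume (Metric.cthickening R F)).toReal := by linarith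
  have hinv : (Real.log R)⁻¹ ≤ 0 := inv_nonpos.2 hlogR.le
  constructor
  · have h := Real.log_le_log hGpos hG2
    have := mul_le_mul_of_nonpos_right h hinv
    unfold qfun; rw [div_eq_mul_inv, div_eq_mul_inv]; linarith
  · have h := Real.log_le_log (by linarith) hG1
    have hmul := mul_le_mul_of_nonpos_right h hinv
    have hsplit : Real.log (2*R) = Real.log 2 + Real.log R :=
      Real.log_mul (by norm_num) (ne_of_gt hR)
    have hfrac : Real.log 2 * (Real.log R)⁻¹ ≤ 0 :=
      mul_nonpos_of_nonneg_of_nonpos (Real.log_nonneg (by norm_num)) hinv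
    unfold qfun; rw [div_eq_mul_inv]
    have hRinv : Real.log R * (Real.log R)⁻¹ = 1 := mul_inv_cancel₀ (ne_of_lt hlogR)
    calc Real.log ((volume (Metric.cthickening R F)).toReal) * (Real.log R)⁻¹
        ≤ Real.log (2*R) * (Real.log R)⁻¹ := hmul
      _ = Real.log 2 * (Real.log R)⁻¹ + 1 := by rw [hsplit]; rw [add_mul, hRinv]
      _ ≤ 1 := by linarith

lemma tendsto_const_div_log (c₀ : ℝ) : Filter.Tendsto (fun R : ℝ => c₀ / Real.log R)
    (nhdsWithin 0 (Set.Ioi 0)) (nhds 0) := by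
  have h : Filter.Tendsto Real.log (nhdsWithin 0 (Set.Ioi 0)) Filter.atBot :=
    Real.tendsto_log_nhdsGT_zero
  have hneg : Filter.Tendsto (fun R : ℝ => -Real.log R) (nhdsWithin 0 (Set.Ioi 0)) Filter.atTop :=
    Filter.tendsto_neg_atBot_atTop.comp h
  have h2' := hneg.inv_tendsto_atTop
  have h2 : Filter.Tendsto (fun R : ℝ => (Real.log R)⁻¹) (nhdsWithin 0 (Set.Ioi 0)) (nhds 0) := by
    have := h2'.neg
    simp only [neg_zero] at this
    convert this using 2 with R
    show (Real.log R)⁻¹ = -(-Real.log R)⁻¹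
    rw [inv_neg, neg_neg]
  have := h2.const_mul c₀
  simp only [mul_zero] at this
  simpa [div_eq_mul_inv] using this

lemma tendsto_log_div : Filter.Tendsto (fun R : ℝ => Real.log 2 / Real.log R)
    (nhdsWithin 0 (Set.Ioi 0)) (nhds 0) := tendsto_const_div_log _

lemma eventually_qfun_le (hF : IsFractalSubset F) (c : FractalComplement F) :
    ∀ᶠ R in nhdsWithin (0:ℝ) (Set.Ioi 0), qfun F R ≤ 1 := by
  rw [(nhdsGT_basis (0:ℝ)).eventually_iff]
  exact ⟨1/2, by norm_num, fun R hR => (qfun_bounds hF c hR.1 hR.2).2⟩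

lemma eventually_qfun_ge (hF : IsFractalSubset F) (c : FractalComplement F) {ε : ℝ} (hε : 0 < ε) :
    ∀ᶠ R in nhdsWithin (0:ℝ) (Set.Ioi 0), -ε ≤ qfun F R := by
  have h1 : ∀ᶠ R in nhdsWithin (0:ℝ) (Set.Ioi 0), -ε ≤ Real.log 2 / Real.log R := by
    have := tendsto_log_div.eventually (eventually_ge_nhds (by linarith : -ε < 0))
    exact this
  have h2 : ∀ᶠ R in nhdsWithin (0:ℝ) (Set.Ioi 0),
      Real.log 2 / Real.log R ≤ qfun F R := by
    rw [(nhdsGT_basis (0:ℝ)).eventually_iff]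
    exact ⟨1/2, by norm_num, fun R hR => (qfun_bounds hF c hR.1 hR.2).1⟩
  filter_upwards [h1, h2] with R hR1 hR2 using le_trans hR1 hR2

lemma qfun_bddUnder (hF : IsFractalSubset F) (c : FractalComplement F) :
    Filter.IsBoundedUnder (· ≥ ·) (nhdsWithin (0:ℝ) (Set.Ioi 0)) (qfun F) :=
  ⟨-1, Filter.eventually_map.2 (eventually_qfun_ge hF c one_pos)⟩

lemma qfun_bddAbove (hF : IsFractalSubset F) (c : FractalComplement F) :
    Filter.IsBoundedUnder (· ≤ ·) (nhdsWithin (0:ℝ) (Set.Ioi 0)) (qfun F) :=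
  ⟨1, Filter.eventually_map.2 (eventually_qfun_le hF c)⟩

lemma L_nonneg (hF : IsFractalSubset F) (c : FractalComplement F) :
    0 ≤ Filter.liminf (qfun F) (nhdsWithin (0:ℝ) (Set.Ioi 0)) := by
  have hcob : Filter.IsCoboundedUnder (· ≥ ·) (nhdsWithin (0:ℝ) (Set.Ioi 0)) (qfun F) :=
    (qfun_bddAbove hF c).isCobounded_ge
  refine le_of_forall_pos_le_add (fun ε hε => ?_)
  have := Filter.le_liminf_of_le hcob (eventually_qfun_ge hF c hε)
  linarith

lemma L_le_one (hF : IsFractalSubset F) (c : FractalComplement F) :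
    Filter.liminf (qfun F) (nhdsWithin (0:ℝ) (Set.Ioi 0)) ≤ 1 :=
  Filter.liminf_le_of_frequently_le ((eventually_qfun_le hF c).frequently) (qfun_bddUnder hF c)

/-- Direction 1: if `Σ len^s` converges with `0 < s`, then `1 - L ≤ s`. -/
lemma dir1 (hF : IsFractalSubset F) (c : FractalComplement F) {s : ℝ} (hs : 0 < s)
    (hsum : Summable (fun n => c.len n ^ s)) :
    1 - Filter.liminf (qfun F) (nhdsWithin (0:ℝ) (Set.Ioi 0)) ≤ s := by
  rcases le_or_gt 1 s with h1 | h1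
  · linarith [L_nonneg hF c]
  -- s < 1 case
  have hcob : Filter.IsCoboundedUnder (· ≥ ·) (nhdsWithin (0:ℝ) (Set.Ioi 0)) (qfun F) :=
    (qfun_bddAbove hF c).isCobounded_ge
  have key : ∀ ε : ℝ, 0 < ε → 1 - s - ε ≤
      Filter.liminf (qfun F) (nhdsWithin (0:ℝ) (Set.Ioi 0)) := by
    intro ε hε
    set C := ∑' n, c.len n ^ s with hC
    have hCpos : 0 < 1 + C := by
      have : 0 ≤ C := tsum_nonneg (fun n => Real.rpow_nonneg (len_pos c n).le _)
      linarith
    set K := (1-s) * Real.log 2 + Real.log (1+C) with hK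
    have hev1 : ∀ᶠ R in nhdsWithin (0:ℝ) (Set.Ioi 0), -ε ≤ K / Real.log R := by
      have h : Filter.Tendsto (fun R : ℝ => K / Real.log R)
          (nhdsWithin 0 (Set.Ioi 0)) (nhds 0) := tendsto_const_div_log K
      exact h.eventually (eventually_ge_nhds (by linarith : -ε < 0))
    have hev2 : ∀ᶠ R in nhdsWithin (0:ℝ) (Set.Ioi 0),
        (1 - s) + K / Real.log R ≤ qfun F R := by
      rw [(nhdsGT_basis (0:ℝ)).eventually_iff]
      refine ⟨1/2, by norm_num, fun R hR => ?_⟩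
      obtain ⟨hR0, hR2⟩ := hR
      have hlogR : Real.log R < 0 := Real.log_neg hR0 (by linarith)
      have hG := vol_moment_ub hF c hs (le_of_lt h1) hsum hR0 (by linarith)
      have hGpos : 0 < (volume (Metric.cthickening R F)).toReal := by
        linarith [vol_lb hF c hR0]
      have hlog : Real.log ((volume (Metric.cthickening R F)).toReal)
          ≤ (1-s) * Real.log (2*R) + Real.log (1+C) := by
        have h2 := Real.log_le_log hGpos hG
        rwa [Real.log_mul (by positivity) (by positivity),
          Real.log_rpow (by linarith : (0:ℝ) < 2*R)] at h2
      have hsplit : Real.log (2*R) = Real.log 2 + Real.log R :=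
        Real.log_mul (by norm_num) (ne_of_gt hR0)
      have hinv : (Real.log R)⁻¹ ≤ 0 := inv_nonpos.2 hlogR.le
      have hmul := mul_le_mul_of_nonpos_right hlog hinv
      have hRinv : Real.log R * (Real.log R)⁻¹ = 1 := mul_inv_cancel₀ (ne_of_lt hlogR)
      unfold qfun
      rw [div_eq_mul_inv]
      calc (1-s) + K / Real.log R
          = ((1-s) * Real.log (2*R) + Real.log (1+C)) * (Real.log R)⁻¹ := by
            rw [div_eq_mul_inv, hsplit, hK]
            linear_combination (s-1) * hRinv
          _ ≤ _ := hmul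
    have hev : ∀ᶠ R in nhdsWithin (0:ℝ) (Set.Ioi 0), 1 - s - ε ≤ qfun F R := by
      filter_upwards [hev1, hev2] with R h1 h2; linarith
    exact Filter.le_liminf_of_le hcob hev
  have := fun ε hε => key ε hε
  nlinarith [le_of_forall_pos_le_add (fun ε hε => by linarith [key ε hε] :
    ∀ ε : ℝ, 0 < ε → 1 - s ≤ Filter.liminf (qfun F) (nhdsWithin (0:ℝ) (Set.Ioi 0)) + ε)]

/-- Direction 2: if `1 - L < s < 1` then `Σ len^s` converges. -/
lemma dir2 (hF : IsFractalSubset F) (c : FractalComplement F) {s : ℝ}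
    (hs1 : s < 1)
    (hs : 1 - Filter.liminf (qfun F) (nhdsWithin (0:ℝ) (Set.Ioi 0)) < s) :
    Summable (fun n => c.len n ^ s) := by
  set L := Filter.liminf (qfun F) (nhdsWithin (0:ℝ) (Set.Ioi 0)) with hLdef
  have hL1 : L ≤ 1 := L_le_one hF c
  have hbL : 1 - s < L := by linarith
  set β := ((1-s) + L) / 2 with hβ
  have hβ1 : 1 - s < β := by rw [hβ]; linarith
  have hβ2 : β < L := by rw [hβ]; linarith
  have hβlt1 : β < 1 := by rw [hβ]; linarith
  have hβpos : 0 < β := by rw [hβ]; nlinarith [L_nonneg hF c]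
  have hev : ∀ᶠ R in nhdsWithin (0:ℝ) (Set.Ioi 0), β < qfun F R :=
    Filter.eventually_lt_of_lt_liminf hβ2 (qfun_bddUnder hF c)
  obtain ⟨δ₀, hδ₀, hδ⟩ := (nhdsGT_basis (0:ℝ)).eventually_iff.1 hev
  set δ := min δ₀ (1/2) with hδdef
  have hδpos : 0 < δ := lt_min hδ₀ (by norm_num)
  -- key pointwise bound : for R ∈ (0, δ), vol(F_R) < R ^ β
  have hKey : ∀ R : ℝ, 0 < R → R < δ →
      (volume (Metric.cthickening R F)).toReal < R ^ β := by
    intro R hR0 hRδ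
    have hq : β < qfun F R := hδ ⟨hR0, hRδ.trans_le (min_le_left _ _)⟩
    have hR2 : R < 1/2 := hRδ.trans_le (min_le_right _ _)
    have hlogR : Real.log R < 0 := Real.log_neg hR0 (by linarith)
    have hGpos : 0 < (volume (Metric.cthickening R F)).toReal := by
      linarith [vol_lb hF c hR0]
    have hlt : Real.log ((volume (Metric.cthickening R F)).toReal) < β * Real.log R :=
      (lt_div_iff_of_neg hlogR).1 hq
    rw [← Real.log_rpow hR0] at hlt
    exact (Real.log_lt_log_iff hGpos (Real.rpow_pos_of_pos hR0 β)).1 hlt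
  -- tail bound on lengths
  have hlen0 : Filter.Tendsto c.len Filter.atTop (nhds 0) := (tsum_len hF c).1.tendsto_atTop_zero
  obtain ⟨N, hN⟩ := (Filter.tendsto_atTop'.1 hlen0) (Set.Iio δ) (Iio_mem_nhds hδpos)
  have hlen_bd : ∀ k ≥ N, c.len k ^ s ≤ (((k:ℝ)+1)⁻¹) ^ (s / (1-β)) := by
    intro k hk
    have hdk : 0 < c.len k := len_pos c k
    have hdkδ : c.len k / 2 < δ := by
      have := hN k hk
      simp only [Set.mem_Iio] at this
      linarith
    have h1 : ((k:ℝ)+1) * c.len k < (c.len k / 2) ^ β :=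
      lt_of_le_of_lt (count_lb hF c k) (hKey _ (by linarith) hdkδ)
    have h2 : (c.len k / 2) ^ β ≤ c.len k ^ β :=
      Real.rpow_le_rpow (by linarith) (by linarith) hβpos.le
    have h3 : ((k:ℝ)+1) * c.len k ≤ c.len k ^ β := le_of_lt (lt_of_lt_of_le h1 h2)
    -- deduce (k+1) * len^(1-β) ≤ 1
    have hbm : (0:ℝ) < c.len k ^ (-β) := Real.rpow_pos_of_pos hdk _
    have h4 : ((k:ℝ)+1) * c.len k ^ (1-β) ≤ 1 := by
      have := mul_le_mul_of_nonneg_right h3 hbm.le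
      calc ((k:ℝ)+1) * c.len k ^ (1-β)
          = ((k:ℝ)+1) * c.len k * c.len k ^ (-β) := by
            rw [mul_assoc]
            congr 1
            rw [show (1:ℝ)-β = 1 + (-β) by ring, Real.rpow_add hdk, Real.rpow_one]
        _ ≤ c.len k ^ β * c.len k ^ (-β) := this
        _ = 1 := by rw [← Real.rpow_add hdk]; norm_num
    have hkpos : (0:ℝ) < (k:ℝ)+1 := by positivity
    have h5 : c.len k ^ (1-β) ≤ ((k:ℝ)+1)⁻¹ := by
      rw [← one_div, le_div_iff₀ hkpos]
      nlinarith [h4]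
    -- raise to power 1/(1-β) then to power s... combine: exponent s/(1-β)
    have h1β : (0:ℝ) < 1 - β := by linarith
    have h6 : c.len k ≤ (((k:ℝ)+1)⁻¹) ^ (1/(1-β)) := by
      have := Real.rpow_le_rpow (Real.rpow_nonneg hdk.le _) h5 (le_of_lt (by positivity : (0:ℝ) < 1/(1-β)))
      rwa [← Real.rpow_mul hdk.le, mul_one_div, div_self (ne_of_gt h1β), Real.rpow_one] at this
    calc c.len k ^ s ≤ ((((k:ℝ)+1)⁻¹) ^ (1/(1-β))) ^ s :=
          Real.rpow_le_rpow hdk.le h6 (by linarith [hβ1] : (0:ℝ) ≤ s)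
      _ = (((k:ℝ)+1)⁻¹) ^ (s / (1-β)) := by
          rw [← Real.rpow_mul (by positivity)]
          congr 1; field_simp
  -- summability via p-series
  have h1β : (0:ℝ) < 1 - β := by linarith
  set α := s / (1-β) with hα
  have hαgt : 1 < α := by
    rw [hα, lt_div_iff₀ h1β]; linarith
  have hsummable : Summable (fun k : ℕ => ((k:ℝ)+1) ^ (-α)) := by
    have h := Real.summable_nat_rpow.2 (show -α < -1 by linarith)
    have h2 := (summable_nat_add_iff 1).2 h
    refine h2.congr (fun k => ?_)
    push_cast
    ring_nf
  have hbd2 : ∀ k ≥ N, c.len k ^ s ≤ ((k:ℝ)+1) ^ (-α) := by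
    intro k hk
    have := hlen_bd k hk
    rwa [Real.inv_rpow (by positivity), ← Real.rpow_neg (by positivity)] at this
  apply (summable_nat_add_iff N).1
  have hmaj : Summable (fun n : ℕ => (((n + N :ℕ):ℝ)+1) ^ (-α)) :=
    (summable_nat_add_iff N).2 hsummable
  refine hmaj.of_nonneg_of_le (fun n => Real.rpow_nonneg (len_pos c _).le _) (fun n => ?_)
  exact_mod_cast hbd2 (n + N) (Nat.le_add_left N n)

lemma mem_S_of_one_le (hF : IsFractalSubset F) (c : FractalComplement F) {s : ℝ} (hs : 1 ≤ s) :
    Summable (fun n => c.len n ^ s) := by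
  refine (tsum_len hF c).1.of_nonneg_of_le (fun n => Real.rpow_nonneg (len_pos c n).le _)
    (fun n => ?_)
  calc c.len n ^ s ≤ c.len n ^ (1:ℝ) :=
        Real.rpow_le_rpow_of_exponent_ge (len_pos c n) (len_le_one hF c n) hs
    _ = c.len n := Real.rpow_one _


/-- the abscissa of convergence of `Σ |I_n|^s` equals the upper Minkowski
dimension `1 - liminf_{r→0⁺} log L(F_r)/log r` of `F`. -/
theorem stmt_0 (F : Set ℝ) (hF : IsFractalSubset F) (c : FractalComplement F) :
    sInf {s : ℝ | 0 < s ∧ Summable (fun n => c.len n ^ s)} =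
      1 - Filter.liminf
        (fun R : ℝ =>
          Real.log ((MeasureTheory.volume (Metric.cthickening R F)).toReal) / Real.log R)
        (nhdsWithin 0 (Set.Ioi 0)) := by
  have hq : (fun R : ℝ =>
      Real.log ((MeasureTheory.volume (Metric.cthickening R F)).toReal) / Real.log R) = qfun F :=
    rfl
  rw [hq]
  set L := Filter.liminf (qfun F) (nhdsWithin (0:ℝ) (Set.Ioi 0)) with hL
  have hL0 : 0 ≤ L := L_nonneg hF c
  have hL1 : L ≤ 1 := L_le_one hF c
  have hone : (1:ℝ) ∈ {s : ℝ | 0 < s ∧ Summable (fun n => c.len n ^ s)} :=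
    ⟨one_pos, mem_S_of_one_le hF c le_rfl⟩
  have hbdd : BddBelow {s : ℝ | 0 < s ∧ Summable (fun n => c.len n ^ s)} :=
    ⟨0, fun s hs => hs.1.le⟩
  apply le_antisymm
  · refine le_of_forall_pos_le_add (fun ε hε => ?_)
    have hmem : (1 - L) + ε ∈ {s : ℝ | 0 < s ∧ Summable (fun n => c.len n ^ s)} := by
      refine ⟨by linarith, ?_⟩
      rcases lt_or_ge ((1 - L) + ε) 1 with h | h
      · exact dir2 hF c h (by linarith)
      · exact mem_S_of_one_le hF c h
    linarith [csInf_le hbdd hmem]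
  · exact le_csInf ⟨1, hone⟩ (fun s hs => dir1 hF c hs.1 hs.2)
end
end

section
/- Let F be a fractal subset of [0,1] with complementary intervals (I_n), let 0 < s < 1, and suppose F is almost s-Minkowski measurable, i.e. there exist constants 0 < c ≤ C and r₀ > 0 such that c·r^{1−s} ≤ L(F_r) ≤ C·r^{1−s} for all 0 < r ≤ r₀, where L is Lebesgue measure and F_r is the closed r-neighbourhood of F. Then there exist constants 0 < c' ≤ C' such that c'·log N ≤ Σ_{n=1}^N |I_n|^s ≤ C'·log N for all N ≥ 2. -/
open MeasureTheory Filter Set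
open scoped Classical

noncomputable section

/-!
Write `g(ρ) = ∑ₙ min(|Iₙ|, ρ)`. The part of `Iₙ` within distance `R` of `F` consists of the points
within `R` of an endpoint, so it has length `min(|Iₙ|, 2R)`; hence `L(F_R)` equals `g(2R)` up to
the two end pieces of length `≤ R`, and almost Minkowski measurability says `g(ρ) ≍ ρ^(1-s)` as
`ρ → 0⁺`. The rest is a statement about nonincreasing sequences with this property.

Upper bound: `(N+1)|I_N| ≤ g(|I_N|) ≲ |I_N|^(1-s)`, so `|I_N|^s ≲ 1/N` and the partial sums are
dominated by the harmonic sum. Lower bound: test `g` at the scale `ρ = η M^(-1/s)`. The first `M`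
terms contribute at most `M ρ = η^s · η^(1-s) M^(1-1/s)` and the tail beyond `B M` at most
`≲ (B M)^(1-1/s)`, both small compared to `g(ρ) ≳ η^(1-s) M^(1-1/s)` once `η` is small and `B` is
large. Since `min(x, ρ) ≤ x^s ρ^(1-s)`, the block `M ≤ n < B M` therefore carries
`∑ |Iₙ|^s ≥ δ`, and the `≍ log_B N` disjoint blocks below `N` give the logarithmic lower bound.
-/

open Topology

lemma rpow_mul_rpow_one_sub {x : ℝ} (hx : 0 ≤ x) (s : ℝ) : x ^ s * x ^ (1 - s) = x := by
  rw [← Real.rpow_add' hx (by simp), add_sub_cancel, Real.rpow_one]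

lemma min_le_rpow_mul_rpow {x y s : ℝ} (hx : 0 ≤ x) (hy : 0 ≤ y) (hs0 : 0 ≤ s)
    (hs1 : s ≤ 1) : min x y ≤ x ^ s * y ^ (1 - s) := by
  calc min x y = min x y ^ s * min x y ^ (1 - s) := (rpow_mul_rpow_one_sub (le_min hx hy) s).symm
    _ ≤ x ^ s * y ^ (1 - s) := by
      have hmin := le_min hx hy
      gcongr
      exacts [min_le_left x y, min_le_right x y]

lemma eventually_le_mul_rpow_one_sub {s k : ℝ} (hs : 0 < s) (hk : 0 < k) :
    ∀ᶠ ρ in 𝓝[>] (0 : ℝ), ρ ≤ k * ρ ^ (1 - s) := by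
  have hlim : Tendsto (fun ρ : ℝ => ρ ^ s) (𝓝[>] 0) (𝓝 0) := by
    simpa [Real.zero_rpow hs.ne'] using
      ((Real.continuousAt_rpow_const 0 s (Or.inr hs.le)).tendsto).mono_left nhdsWithin_le_nhds
  filter_upwards [hlim.eventually_le_const hk, self_mem_nhdsWithin] with ρ hρs (hρ : 0 < ρ)
  calc ρ = ρ ^ s * ρ ^ (1 - s) := (rpow_mul_rpow_one_sub hρ.le s).symm
    _ ≤ k * ρ ^ (1 - s) := by gcongr

lemma harmonic_le_mul_log {N : ℕ} (hN : 2 ≤ N) :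
    (harmonic N : ℝ) ≤ (1 + (Real.log 2)⁻¹) * Real.log N := by
  have hlog2 : 0 < Real.log 2 := Real.log_pos one_lt_two
  have hlogN : Real.log 2 ≤ Real.log N := Real.log_le_log two_pos (by exact_mod_cast hN)
  have : 1 ≤ (Real.log 2)⁻¹ * Real.log N := by
    rw [inv_mul_eq_div, le_div_iff₀ hlog2]; linarith
  linarith [harmonic_le_one_add_log N]

lemma sum_range_le_mul_harmonic {b : ℕ → ℝ} {D : ℝ} (hb : ∀ n : ℕ, (n + 1) * b n ≤ D)
    (N : ℕ) : ∑ n ∈ Finset.range N, b n ≤ D * harmonic N := by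
  calc ∑ n ∈ Finset.range N, b n ≤ ∑ n ∈ Finset.range N, D * ((n : ℝ) + 1)⁻¹ :=
        Finset.sum_le_sum fun n _ => by
          rw [← div_eq_mul_inv, le_div_iff₀ (by positivity), mul_comm]; exact hb n
    _ = D * harmonic N := by simp [harmonic, Finset.mul_sum]

lemma tsum_nat_add_le_tsum {f : ℕ → ℝ} (hf0 : ∀ n, 0 ≤ f n) (hf : Summable f) (N : ℕ) :
    ∑' n, f (n + N) ≤ ∑' n, f n := by
  rw [← hf.sum_add_tsum_nat_add N]
  exact le_add_of_nonneg_left (Finset.sum_nonneg fun n _ => hf0 n)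

section AntitoneSequence

variable {a : ℕ → ℝ}

lemma summable_min_const (ha0 : ∀ n, 0 ≤ a n) (hsum : Summable a) {ρ : ℝ} (hρ : 0 ≤ ρ) :
    Summable fun n => min (a n) ρ :=
  hsum.of_nonneg_of_le (fun n => le_min (ha0 n) hρ) fun _ => min_le_left _ _

lemma succ_mul_le_tsum_min (ha : Antitone a) (ha0 : ∀ n, 0 ≤ a n) (hsum : Summable a)
    (N : ℕ) : (N + 1) * a N ≤ ∑' n, min (a n) (a N) := by
  calc (N + 1) * a N = ∑ n ∈ Finset.range (N + 1), min (a n) (a N) := by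
        rw [Finset.sum_congr rfl fun n hn => min_eq_right (ha (Finset.mem_range_succ_iff.1 hn))]
        simp
    _ ≤ ∑' n, min (a n) (a N) :=
        (summable_min_const ha0 hsum (ha0 N)).sum_le_tsum _ fun n _ => le_min (ha0 n) (ha0 N)

lemma tsum_min_le (ha0 : ∀ n, 0 ≤ a n) (hsum : Summable a) {ρ s : ℝ} (hρ : 0 ≤ ρ)
    (hs0 : 0 ≤ s) (hs1 : s ≤ 1) {M N : ℕ} (hMN : M ≤ N) :
    ∑' n, min (a n) ρ ≤
      M * ρ + (∑ n ∈ Finset.Ico M N, a n ^ s) * ρ ^ (1 - s) + ∑' n, a (n + N) := by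
  have hmin := summable_min_const ha0 hsum hρ
  rw [← hmin.sum_add_tsum_nat_add N, ← Finset.sum_range_add_sum_Ico _ hMN, Finset.sum_mul]
  gcongr ?_ + ?_ + ?_
  · calc ∑ n ∈ Finset.range M, min (a n) ρ ≤ ∑ _n ∈ Finset.range M, ρ :=
          Finset.sum_le_sum fun n _ => min_le_right _ _
      _ = M * ρ := by simp
  · exact Finset.sum_le_sum fun n _ => min_le_rpow_mul_rpow (ha0 n) hρ hs0 hs1
  · exact ((summable_nat_add_iff N).2 hmin).tsum_le_tsum (fun n => min_le_left _ _)
      ((summable_nat_add_iff N).2 hsum)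

lemma tendsto_nhdsGT_zero_of_summable (hpos : ∀ n, 0 < a n) (hsum : Summable a) :
    Tendsto a atTop (𝓝[>] 0) :=
  tendsto_nhdsWithin_iff.2 ⟨hsum.tendsto_atTop_zero, Eventually.of_forall hpos⟩

variable {s C : ℝ}

lemma eventually_succ_mul_rpow_le (ha : Antitone a) (hpos : ∀ n, 0 < a n) (hsum : Summable a)
    (hU : ∀ᶠ ρ in 𝓝[>] 0, ∑' n, min (a n) ρ ≤ C * ρ ^ (1 - s)) :
    ∀ᶠ N in atTop, (N + 1) * a N ^ s ≤ C := by
  filter_upwards [(tendsto_nhdsGT_zero_of_summable hpos hsum).eventually hU] with N hN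
  refine le_of_mul_le_mul_right ?_ (Real.rpow_pos_of_pos (hpos N) (1 - s))
  calc (N + 1) * a N ^ s * a N ^ (1 - s) = (N + 1) * a N := by
        rw [mul_assoc, rpow_mul_rpow_one_sub (hpos N).le]
    _ ≤ C * a N ^ (1 - s) := (succ_mul_le_tsum_min ha (fun n => (hpos n).le) hsum N).trans hN

lemma exists_succ_mul_rpow_le (ha : Antitone a) (hpos : ∀ n, 0 < a n) (hsum : Summable a)
    (hU : ∀ᶠ ρ in 𝓝[>] 0, ∑' n, min (a n) ρ ≤ C * ρ ^ (1 - s)) :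
    ∃ D, ∀ N : ℕ, (N + 1) * a N ^ s ≤ D := by
  obtain ⟨D, hD⟩ := (isBoundedUnder_of_eventually_le
    (eventually_succ_mul_rpow_le ha hpos hsum hU)).bddAbove_range
  exact ⟨D, fun N => hD ⟨N, rfl⟩⟩

lemma exists_tsum_nat_add_le (ha : Antitone a) (hpos : ∀ n, 0 < a n) (hsum : Summable a)
    (hs0 : 0 < s) (hs1 : s < 1)
    (hU : ∀ᶠ ρ in 𝓝[>] 0, ∑' n, min (a n) ρ ≤ C * ρ ^ (1 - s)) :
    ∃ E, ∀ᶠ N in atTop, ∑' n, a (n + N) ≤ E * (N : ℝ) ^ (1 - s⁻¹) := by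
  have ha0 n : 0 ≤ a n := (hpos n).le
  refine ⟨C * C ^ (s⁻¹ - 1), ?_⟩
  filter_upwards [(tendsto_nhdsGT_zero_of_summable hpos hsum).eventually hU,
    eventually_succ_mul_rpow_le ha hpos hsum hU, eventually_ge_atTop 1] with N hUN hCN hN
  have hN0 : (0 : ℝ) < N := by exact_mod_cast hN
  have hC : 0 < C := lt_of_lt_of_le (by have := hpos N; positivity) hCN
  have hpow : a N ^ s ≤ C / N := by
    rw [le_div_iff₀ hN0]
    nlinarith [Real.rpow_pos_of_pos (hpos N) s]
  have he : 0 ≤ s⁻¹ - 1 := by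
    rw [sub_nonneg, one_le_inv₀ hs0]; exact hs1.le
  calc ∑' n, a (n + N) = ∑' n, min (a (n + N)) (a N) :=
        tsum_congr fun n => (min_eq_left (ha (Nat.le_add_left N n))).symm
    _ ≤ ∑' n, min (a n) (a N) :=
        tsum_nat_add_le_tsum (fun n => le_min (ha0 n) (ha0 N))
          (summable_min_const ha0 hsum (ha0 N)) N
    _ ≤ C * a N ^ (1 - s) := hUN
    _ = C * (a N ^ s) ^ (s⁻¹ - 1) := by
        rw [← Real.rpow_mul (ha0 N)]; congr 2; field_simp
    _ ≤ C * (C / N) ^ (s⁻¹ - 1) := by gcongr; exact Real.rpow_nonneg (ha0 N) s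
    _ = C * C ^ (s⁻¹ - 1) * (N : ℝ) ^ (1 - s⁻¹) := by
        rw [Real.div_rpow hC.le hN0.le, div_eq_mul_inv, ← Real.rpow_neg hN0.le, neg_sub,
          mul_assoc]

lemma exists_tsum_nat_add_mul_le (ha : Antitone a) (hpos : ∀ n, 0 < a n) (hsum : Summable a)
    (hs0 : 0 < s) (hs1 : s < 1)
    (hU : ∀ᶠ ρ in 𝓝[>] 0, ∑' n, min (a n) ρ ≤ C * ρ ^ (1 - s)) {ε : ℝ} (hε : 0 < ε) :
    ∃ B : ℕ, 1 < B ∧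
      ∀ᶠ M in atTop, ∑' n, a (n + B * M) ≤ ε * (M : ℝ) ^ (1 - s⁻¹) := by
  obtain ⟨E, hE⟩ := exists_tsum_nat_add_le ha hpos hsum hs0 hs1 hU
  have hlim : Tendsto (fun B : ℕ => E * (B : ℝ) ^ (1 - s⁻¹)) atTop (𝓝 0) := by
    have he : 0 < s⁻¹ - 1 := by rw [sub_pos, one_lt_inv₀ hs0]; exact hs1
    simpa [neg_sub] using
      ((tendsto_rpow_neg_atTop he).comp tendsto_natCast_atTop_atTop).const_mul E
  obtain ⟨B, hBε, hB⟩ := ((hlim.eventually_le_const hε).and (eventually_gt_atTop 1)).exists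
  have hBM : Tendsto (B * ·) atTop atTop := tendsto_atTop_atTop.2 fun b =>
    ⟨b, fun M hM => hM.trans (Nat.le_mul_of_pos_left M (by omega))⟩
  refine ⟨B, hB, ?_⟩
  filter_upwards [hBM.eventually hE, eventually_ge_atTop 1] with M hM hM1
  have hM0 : (0 : ℝ) < M := by exact_mod_cast hM1
  calc ∑' n, a (n + B * M) ≤ E * (B : ℝ) ^ (1 - s⁻¹) * (M : ℝ) ^ (1 - s⁻¹) := by
        rwa [Nat.cast_mul, Real.mul_rpow (by positivity) hM0.le, ← mul_assoc] at hM
    _ ≤ ε * (M : ℝ) ^ (1 - s⁻¹) := by gcongr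

lemma exists_add_le_sum_range_mul (ha : Antitone a) (hpos : ∀ n, 0 < a n) (hsum : Summable a)
    (hs0 : 0 < s) (hs1 : s < 1) {c : ℝ} (hc : 0 < c)
    (hU : ∀ᶠ ρ in 𝓝[>] 0, ∑' n, min (a n) ρ ≤ C * ρ ^ (1 - s))
    (hL : ∀ᶠ ρ in 𝓝[>] 0, c * ρ ^ (1 - s) ≤ ∑' n, min (a n) ρ) :
    ∃ δ > 0, ∃ B : ℕ, 1 < B ∧ ∀ᶠ M in atTop,
      ∑ n ∈ Finset.range M, a n ^ s + δ ≤ ∑ n ∈ Finset.range (B * M), a n ^ s := by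
  obtain ⟨ρ₀, hρ₀, hLρ₀⟩ := mem_nhdsGT_iff_exists_Ioc_subset.1 hL
  obtain ⟨η, hηs, hη0, hηρ₀⟩ := ((eventually_le_mul_rpow_one_sub hs0
    (by positivity : 0 < c / 4)).and (Ioc_mem_nhdsGT hρ₀)).exists
  have hηpow : 0 < η ^ (1 - s) := Real.rpow_pos_of_pos hη0 _
  obtain ⟨B, hB, htail⟩ := exists_tsum_nat_add_mul_le ha hpos hsum hs0 hs1 hU
    (by positivity : 0 < c / 4 * η ^ (1 - s))
  refine ⟨c / 2, by positivity, B, hB, ?_⟩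
  filter_upwards [htail, eventually_ge_atTop 1] with M hMtail hM
  have hM1 : (1 : ℝ) ≤ M := by exact_mod_cast hM
  have hM0 : (0 : ℝ) < M := by linarith
  have hMBM : M ≤ B * M := Nat.le_mul_of_pos_left M (by omega)
  have hMρ : M * (η * (M : ℝ) ^ (-s⁻¹)) = η * (M : ℝ) ^ (1 - s⁻¹) := by
    rw [show (1 : ℝ) - s⁻¹ = 1 + -s⁻¹ by ring, Real.rpow_add hM0, Real.rpow_one]; ring
  have hρs : (η * (M : ℝ) ^ (-s⁻¹)) ^ (1 - s) = η ^ (1 - s) * (M : ℝ) ^ (1 - s⁻¹) := by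
    rw [Real.mul_rpow hη0.le (by positivity), ← Real.rpow_mul hM0.le]
    congr 2; field_simp; ring
  set P := (M : ℝ) ^ (1 - s⁻¹)
  set ρ := η * (M : ℝ) ^ (-s⁻¹)
  have hρ0 : 0 < ρ := by positivity
  have hρη : ρ ≤ η := mul_le_of_le_one_right hη0.le
    (Real.rpow_le_one_of_one_le_of_nonpos hM1 (by simp [hs0.le]))
  have hmain := (hLρ₀ ⟨hρ0, hρη.trans hηρ₀⟩).trans
    (tsum_min_le (fun n => (hpos n).le) hsum hρ0.le hs0.le hs1.le hMBM)
  rw [hMρ, hρs] at hmain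
  set Q := ∑ n ∈ Finset.Ico M (B * M), a n ^ s
  have hP : 0 < P := by positivity
  have hηP : η * P ≤ c / 4 * (η ^ (1 - s) * P) := by
    rw [← mul_assoc]; exact mul_le_mul_of_nonneg_right hηs hP.le
  have hQ : c / 2 ≤ Q := le_of_mul_le_mul_right (by nlinarith) (mul_pos hηpow hP)
  rw [← Finset.sum_range_add_sum_Ico _ hMBM]
  linarith

lemma exists_mul_log_le_of_add_le {S : ℕ → ℝ} (hS : Monotone S) (hS1 : 0 < S 1) {δ : ℝ}
    (hδ : 0 < δ) {B : ℕ} (hB : 1 < B) (hstep : ∀ᶠ M in atTop, S M + δ ≤ S (B * M)) :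
    ∃ c > 0, ∀ N : ℕ, 1 ≤ N → c * Real.log N ≤ S N := by
  obtain ⟨M₀, hM₀⟩ := eventually_atTop.1 hstep
  set M₁ := max M₀ 1
  have hB1 : (1 : ℝ) < B := by exact_mod_cast hB
  have hM₁ : (1 : ℝ) ≤ M₁ := by exact_mod_cast le_max_right M₀ 1
  have hlog2B : 0 < Real.log (2 * B) := Real.log_pos (by linarith)
  have hlogBM : 0 < Real.log (B * M₁) := Real.log_pos (by nlinarith)
  set c := min (δ / Real.log (2 * B)) (S 1 / Real.log (B * M₁))
  have hc : 0 < c := lt_min (by positivity) (by positivity)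
  refine ⟨c, hc, fun N => ?_⟩
  induction N using Nat.strong_induction_on with
  | _ N ih =>
    intro hN
    have hN0 : (0 : ℝ) < N := by exact_mod_cast hN
    by_cases h : M₁ ≤ N / B
    · set M := N / B
      have hM1 : 1 ≤ M := (le_max_right M₀ 1).trans h
      have hNM : (N : ℝ) ≤ 2 * B * M := by
        have h1 : N < B * (M + 1) := Nat.lt_mul_div_succ N (by omega)
        have h2 : B ≤ B * M := Nat.le_mul_of_pos_right B hM1
        exact_mod_cast (by nlinarith : N ≤ 2 * B * M)
      have hlog : Real.log N ≤ Real.log M + Real.log (2 * B) := by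
        rw [← Real.log_mul (by positivity) (by positivity)]
        exact Real.log_le_log hN0 (by linarith)
      calc c * Real.log N ≤ c * Real.log M + c * Real.log (2 * B) := by
            rw [← mul_add]; exact mul_le_mul_of_nonneg_left hlog hc.le
        _ ≤ S M + δ := by
            gcongr
            · exact ih M (Nat.div_lt_self hN hB) hM1
            · exact (mul_le_mul_of_nonneg_right (min_le_left _ _) hlog2B.le).trans
                (div_mul_cancel₀ _ hlog2B.ne').le
        _ ≤ S (B * M) := hM₀ M ((le_max_left _ _).trans h)
        _ ≤ S N := hS (Nat.mul_div_le N B)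
    · have hNB : (N : ℝ) ≤ B * M₁ := by
        have := (Nat.div_lt_iff_lt_mul (by omega)).1 (not_le.1 h)
        exact_mod_cast (by linarith : N ≤ B * M₁)
      calc c * Real.log N ≤ S 1 / Real.log (B * M₁) * Real.log (B * M₁) :=
            mul_le_mul (min_le_right _ _) (Real.log_le_log hN0 hNB)
              (Real.log_nonneg (by exact_mod_cast hN)) (by positivity)
        _ = S 1 := div_mul_cancel₀ _ hlogBM.ne'
        _ ≤ S N := hS hN

theorem exists_mul_log_le_sum_rpow_le_mul_log (ha : Antitone a) (hpos : ∀ n, 0 < a n)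
    (hsum : Summable a) (hs0 : 0 < s) (hs1 : s < 1) {c : ℝ} (hc : 0 < c)
    (hU : ∀ᶠ ρ in 𝓝[>] 0, ∑' n, min (a n) ρ ≤ C * ρ ^ (1 - s))
    (hL : ∀ᶠ ρ in 𝓝[>] 0, c * ρ ^ (1 - s) ≤ ∑' n, min (a n) ρ) :
    ∃ c' C' : ℝ, 0 < c' ∧ c' ≤ C' ∧ ∀ N : ℕ, 2 ≤ N →
      c' * Real.log N ≤ ∑ n ∈ Finset.range N, a n ^ s ∧
      ∑ n ∈ Finset.range N, a n ^ s ≤ C' * Real.log N := by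
  obtain ⟨D, hD⟩ := exists_succ_mul_rpow_le ha hpos hsum hU
  obtain ⟨δ, hδ, B, hB, hstep⟩ := exists_add_le_sum_range_mul ha hpos hsum hs0 hs1 hc hU hL
  have hmono : Monotone fun N => ∑ n ∈ Finset.range N, a n ^ s := fun M N h =>
    Finset.sum_le_sum_of_subset_of_nonneg (Finset.range_subset_range.2 h)
      fun n _ _ => (Real.rpow_pos_of_pos (hpos n) s).le
  obtain ⟨c', hc', hlow⟩ := exists_mul_log_le_of_add_le hmono
    (by simpa using Real.rpow_pos_of_pos (hpos 0) s) hδ hB hstep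
  have hD0 : 0 ≤ D := le_trans (by have := hpos 0; positivity) (hD 0)
  set C' := D * (1 + (Real.log 2)⁻¹)
  have hup : ∀ N : ℕ, 2 ≤ N → ∑ n ∈ Finset.range N, a n ^ s ≤ C' * Real.log N := fun N hN => by
    rw [mul_assoc]
    exact (sum_range_le_mul_harmonic hD N).trans
      (mul_le_mul_of_nonneg_left (harmonic_le_mul_log hN) hD0)
  refine ⟨c', C', hc', ?_, fun N hN => ⟨hlow N (by omega), hup N hN⟩⟩
  have h2 := (hlow 2 (by norm_num)).trans (hup 2 le_rfl)
  exact le_of_mul_le_mul_right (by simpa using h2) (Real.log_pos (by norm_num))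

end AntitoneSequence

namespace FractalComplement

variable {F : Set ℝ} (c : FractalComplement F)

lemma len_pos (n : ℕ) : 0 < c.len n := sub_pos.2 (c.lt n)

lemma antitone_len : Antitone c.len := antitone_nat_of_succ_le c.mono

lemma Ioo_subset_Icc_sdiff (n : ℕ) : Ioo (c.l n) (c.r n) ⊆ Icc 0 1 \ F :=
  c.union ▸ subset_iUnion (fun n => Ioo (c.l n) (c.r n)) n

lemma mem_of_mem_closure_of_notMem {n : ℕ} {x : ℝ} (hx : x ∈ closure (Ioo (c.l n) (c.r n)))
    (hxn : x ∉ Ioo (c.l n) (c.r n)) : x ∈ F := by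
  by_contra hxF
  have hx01 : x ∈ Icc (0 : ℝ) 1 :=
    closure_minimal (fun y hy => (c.Ioo_subset_Icc_sdiff n hy).1) isClosed_Icc hx
  obtain ⟨m, hm⟩ :=
    mem_iUnion.1 (c.union.symm ▸ ⟨hx01, hxF⟩ : x ∈ ⋃ m, Ioo (c.l m) (c.r m))
  have hmn : m ≠ n := by rintro rfl; exact hxn hm
  obtain ⟨y, hym, hyn⟩ := mem_closure_iff_nhds.1 hx _ (Ioo_mem_nhds hm.1 hm.2)
  exact disjoint_left.1 (c.disj hmn) hym hyn

lemma l_mem (n : ℕ) : c.l n ∈ F :=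
  c.mem_of_mem_closure_of_notMem
    (by rw [closure_Ioo (c.lt n).ne]; exact left_mem_Icc.2 (c.lt n).le) fun h => lt_irrefl _ h.1

lemma r_mem (n : ℕ) : c.r n ∈ F :=
  c.mem_of_mem_closure_of_notMem
    (by rw [closure_Ioo (c.lt n).ne]; exact right_mem_Icc.2 (c.lt n).le) fun h => lt_irrefl _ h.2

lemma summable_len : Summable c.len := by
  have hvol : ∑' n, volume (Ioo (c.l n) (c.r n)) ≠ ⊤ := by
    rw [← measure_iUnion c.disj fun n => measurableSet_Ioo, c.union]
    exact ((measure_mono sdiff_subset).trans_lt (by simp)).ne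
  show Summable fun n => c.r n - c.l n
  simpa [Real.volume_Ioo, (c.lt _).le] using ENNReal.summable_toReal hvol

lemma Ioo_inter_cthickening (hF : IsClosed F) {R : ℝ} (hR : 0 ≤ R) (n : ℕ) :
    Ioo (c.l n) (c.r n) ∩ Metric.cthickening R F =
      Ioo (c.l n) (c.r n) \ Ioo (c.l n + R) (c.r n - R) := by
  ext x
  simp only [mem_inter_iff, Set.mem_sdiff, and_congr_right_iff]
  intro hx
  constructor
  · intro hxF ⟨hl, hr⟩
    rw [hF.cthickening_eq_biUnion_closedBall hR] at hxF
    obtain ⟨y, hyF, hxy⟩ := mem_iUnion₂.1 hxF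
    rw [Metric.mem_closedBall, Real.dist_eq, abs_le] at hxy
    have hy : y ∉ Ioo (c.l n) (c.r n) := fun hy => (c.Ioo_subset_Icc_sdiff n hy).2 hyF
    rw [mem_Ioo, not_and_or, not_lt, not_lt] at hy
    rcases hy with hy | hy <;> linarith
  · intro hx'
    rw [mem_Ioo, not_and_or, not_lt, not_lt] at hx'
    rcases hx' with h | h
    · exact Metric.mem_cthickening_of_dist_le x _ R F (c.l_mem n)
        (by rw [Real.dist_eq, abs_le]; constructor <;> linarith [hx.1])
    · exact Metric.mem_cthickening_of_dist_le x _ R F (c.r_mem n)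
        (by rw [Real.dist_eq, abs_le]; constructor <;> linarith [hx.2])

lemma volume_Ioo_inter_cthickening (hF : IsClosed F) {R : ℝ} (hR : 0 ≤ R) (n : ℕ) :
    volume (Ioo (c.l n) (c.r n) ∩ Metric.cthickening R F) =
      ENNReal.ofReal (min (c.len n) (2 * R)) := by
  rw [c.Ioo_inter_cthickening hF hR n, measure_sdiff (Ioo_subset_Ioo (by linarith) (by linarith))
    measurableSet_Ioo.nullMeasurableSet measure_Ioo_lt_top.ne, Real.volume_Ioo, Real.volume_Ioo]
  unfold len
  rcases le_total (c.r n - c.l n) (2 * R) with h | h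
  · rw [min_eq_left h, ENNReal.ofReal_of_nonpos (show c.r n - R - (c.l n + R) ≤ 0 by linarith),
      tsub_zero]
  · rw [min_eq_right h, ← ENNReal.ofReal_sub _ (by linarith)]
    congr 1; ring

lemma volume_cthickening_inter_Icc_sdiff (hF : IsClosed F) {R : ℝ} (hR : 0 ≤ R) :
    volume (Metric.cthickening R F ∩ (Icc 0 1 \ F)) =
      ENNReal.ofReal (∑' n, min (c.len n) (2 * R)) := by
  rw [← c.union, inter_iUnion, measure_iUnion
      (fun m n h => (c.disj h).mono inter_subset_right inter_subset_right)
      (fun n => Metric.isClosed_cthickening.measurableSet.inter measurableSet_Ioo),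
    ENNReal.ofReal_tsum_of_nonneg (fun n => le_min (c.len_pos n).le (by positivity))
      (summable_min_const (fun n => (c.len_pos n).le) c.summable_len (by positivity))]
  exact tsum_congr fun n => by rw [inter_comm, c.volume_Ioo_inter_cthickening hF hR n]

lemma tsum_min_len_le_volume_cthickening (hF : IsFractalSubset F) {R : ℝ} (hR : 0 ≤ R) :
    ∑' n, min (c.len n) (2 * R) ≤ (volume (Metric.cthickening R F)).toReal := by
  have hfin : volume (Metric.cthickening R F) ≠ ⊤ :=
    hF.1.isBounded.cthickening.measure_lt_top.ne
  rw [← ENNReal.ofReal_le_iff_le_toReal hfin,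
    ← c.volume_cthickening_inter_Icc_sdiff hF.1.isClosed hR]
  exact measure_mono inter_subset_left

lemma volume_cthickening_le (hF : IsFractalSubset F) {R : ℝ} (hR : 0 ≤ R) :
    (volume (Metric.cthickening R F)).toReal ≤ 2 * R + ∑' n, min (c.len n) (2 * R) := by
  have hsub : Metric.cthickening R F \ (Icc 0 1 \ F) ⊆ Icc (-R) 0 ∪ Icc 1 (1 + R) ∪ F := by
    rintro x ⟨hx, hx'⟩
    by_cases hxF : x ∈ F
    · exact Or.inr hxF
    rw [hF.1.isClosed.cthickening_eq_biUnion_closedBall hR] at hx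
    obtain ⟨y, hyF, hxy⟩ := mem_iUnion₂.1 hx
    rw [Metric.mem_closedBall, Real.dist_eq, abs_le] at hxy
    have hy := hF.2.1 hyF
    have hx01 : x ∉ Icc (0 : ℝ) 1 := fun h => hx' ⟨h, hxF⟩
    rw [mem_Icc, not_and_or, not_le, not_le] at hx01
    rcases hx01 with h | h
    · exact Or.inl (Or.inl ⟨by linarith [hy.1], h.le⟩)
    · exact Or.inl (Or.inr ⟨h.le, by linarith [hy.2]⟩)
  have hmeas : MeasurableSet (Icc (0 : ℝ) 1 \ F) :=
    measurableSet_Icc.diff hF.1.isClosed.measurableSet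
  have hsum : 0 ≤ ∑' n, min (c.len n) (2 * R) :=
    tsum_nonneg fun n => le_min (c.len_pos n).le (by positivity)
  refine ENNReal.toReal_le_of_le_ofReal (by positivity) ?_
  calc volume (Metric.cthickening R F)
      = volume (Metric.cthickening R F ∩ (Icc 0 1 \ F))
        + volume (Metric.cthickening R F \ (Icc 0 1 \ F)) :=
        (measure_inter_add_sdiff _ hmeas).symm
    _ ≤ ENNReal.ofReal (∑' n, min (c.len n) (2 * R))
        + (volume (Icc (-R) 0) + volume (Icc 1 (1 + R)) + volume F) := by
        rw [c.volume_cthickening_inter_Icc_sdiff hF.1.isClosed hR]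
        gcongr
        exact (measure_mono hsub).trans ((measure_union_le _ _).trans
          (add_le_add_left (measure_union_le _ _) _))
    _ = ENNReal.ofReal (2 * R + ∑' n, min (c.len n) (2 * R)) := by
        rw [Real.volume_Icc, Real.volume_Icc, hF.2.2.2.2, add_zero,
          ← ENNReal.ofReal_add (by linarith) (by linarith),
          ← ENNReal.ofReal_add hsum (by linarith)]
        congr 1; ring

lemma eventually_tsum_min_len_le (hF : IsFractalSubset F) {s CM r₀ : ℝ} (hr₀ : 0 < r₀)
    (hmink : ∀ R : ℝ, 0 < R → R ≤ r₀ →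
      (volume (Metric.cthickening R F)).toReal ≤ CM * R ^ (1 - s)) :
    ∀ᶠ ρ in 𝓝[>] 0, ∑' n, min (c.len n) ρ ≤ CM / 2 ^ (1 - s) * ρ ^ (1 - s) := by
  filter_upwards [Ioc_mem_nhdsGT (by positivity : (0 : ℝ) < 2 * r₀)] with ρ ⟨hρ, hρr₀⟩
  have h := (c.tsum_min_len_le_volume_cthickening hF (half_pos hρ).le).trans
    (hmink (ρ / 2) (half_pos hρ) (by linarith))
  rw [mul_div_cancel₀ ρ two_ne_zero, Real.div_rpow hρ.le zero_le_two] at h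
  linarith [show CM * (ρ ^ (1 - s) / 2 ^ (1 - s)) = CM / 2 ^ (1 - s) * ρ ^ (1 - s) by ring]

lemma eventually_le_tsum_min_len (hF : IsFractalSubset F) {s cm r₀ : ℝ} (hs0 : 0 < s)
    (hcm : 0 < cm) (hr₀ : 0 < r₀)
    (hmink : ∀ R : ℝ, 0 < R → R ≤ r₀ →
      cm * R ^ (1 - s) ≤ (volume (Metric.cthickening R F)).toReal) :
    ∀ᶠ ρ in 𝓝[>] 0, cm / 2 ^ (1 - s) / 2 * ρ ^ (1 - s) ≤ ∑' n, min (c.len n) ρ := by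
  filter_upwards [Ioc_mem_nhdsGT (by positivity : (0 : ℝ) < 2 * r₀),
    eventually_le_mul_rpow_one_sub hs0 (by positivity : 0 < cm / 2 ^ (1 - s) / 2)]
    with ρ ⟨hρ, hρr₀⟩ hρk
  have h := (hmink (ρ / 2) (half_pos hρ) (by linarith)).trans
    (c.volume_cthickening_le hF (half_pos hρ).le)
  rw [mul_div_cancel₀ ρ two_ne_zero, Real.div_rpow hρ.le zero_le_two] at h
  linarith [show cm * (ρ ^ (1 - s) / 2 ^ (1 - s)) = 2 * (cm / 2 ^ (1 - s) / 2 * ρ ^ (1 - s)) by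
    ring]

end FractalComplement

theorem stmt_1_general (F : Set ℝ) (hF : IsFractalSubset F) (c : FractalComplement F)
    (s : ℝ) (hs0 : 0 < s) (hs1 : s < 1)
    (cm CM r₀ : ℝ) (hcm : 0 < cm) (hr₀ : 0 < r₀)
    (hmink : ∀ R : ℝ, 0 < R → R ≤ r₀ →
      cm * R ^ (1 - s) ≤ (MeasureTheory.volume (Metric.cthickening R F)).toReal ∧
      (MeasureTheory.volume (Metric.cthickening R F)).toReal ≤ CM * R ^ (1 - s)) :
    ∃ c' C' : ℝ, 0 < c' ∧ c' ≤ C' ∧ ∀ N : ℕ, 2 ≤ N →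
      c' * Real.log N ≤ ∑ n ∈ Finset.range N, c.len n ^ s ∧
      ∑ n ∈ Finset.range N, c.len n ^ s ≤ C' * Real.log N := by
  exact exists_mul_log_le_sum_rpow_le_mul_log c.antitone_len c.len_pos c.summable_len hs0 hs1
    (by positivity) (c.eventually_tsum_min_len_le hF hr₀ fun R h1 h2 => (hmink R h1 h2).2)
    (c.eventually_le_tsum_min_len hF hs0 hcm hr₀ fun R h1 h2 => (hmink R h1 h2).1)

/-- if `F` is almost `s`-Minkowski measurable then the partial sums
`Σ_{n<N} |I_n|^s` are comparable to `log N`. -/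
theorem stmt_1 (F : Set ℝ) (hF : IsFractalSubset F) (c : FractalComplement F)
    (s : ℝ) (hs0 : 0 < s) (hs1 : s < 1)
    (cm CM r₀ : ℝ) (hcm : 0 < cm) (hcmCM : cm ≤ CM) (hr₀ : 0 < r₀)
    (hmink : ∀ R : ℝ, 0 < R → R ≤ r₀ →
      cm * R ^ (1 - s) ≤ (MeasureTheory.volume (Metric.cthickening R F)).toReal ∧
      (MeasureTheory.volume (Metric.cthickening R F)).toReal ≤ CM * R ^ (1 - s)) :
    ∃ c' C' : ℝ, 0 < c' ∧ c' ≤ C' ∧ ∀ N : ℕ, 2 ≤ N →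
      c' * Real.log N ≤ ∑ n ∈ Finset.range N, c.len n ^ s ∧
      ∑ n ∈ Finset.range N, c.len n ^ s ≤ C' * Real.log N :=
  stmt_1_general F hF c s hs0 hs1 cm CM r₀ hcm hr₀ hmink
end
end

section
/- Let ψ_1, …, ψ_m (m ≥ 2) be contracting similarities of ℝ with ratios r_1, …, r_m ∈ (0,1) such that the intervals ψ_i([0,1]) ⊆ [0,1] are pairwise disjoint and ordered: 0 = ψ_1(0) < ψ_1(1) < ψ_2(0) < ⋯ < ψ_m(0) < ψ_m(1) = 1, and let F be the attractor, i.e. the unique nonempty compact set with F = ⋃_{i=1}^m ψ_i(F). Then the Hausdorff dimension of F equals s, where s is the unique positive real number satisfying Σ_{i=1}^m r_i^s = 1; moreover lim_{r→0⁺} log L(F_r)/log r = 1 − s, where L is Lebesgue measure and F_r is the closed r-neighbourhood of F (so the Minkowski dimension of F also equals s). -/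
open MeasureTheory Filter Set
open scoped Classical

noncomputable section

/-!
Each similarity is affine, `ψ i x = b i + r i * x`. Let `μ` be the self-similar measure with
weights `r i ^ s`; its distribution function is the fixed point of
`f ↦ ∑ i, r i ^ s * f ((x - b i) / r i)`. An interval shorter than the gaps between the pieces
meets only one of them, so induction on the scale gives `μ [x, y] ≤ ((y - x) / g) ^ s`, and
zooming into the piece containing `x ∈ F` gives `μ (ball x R) ≥ (ε * R) ^ s`, where `g` is the
least gap and `ε` the least ratio. The first bound gives `dimH F ≥ s` (mass distribution
principle). Together they make the number `N(R)` of `R`-grid cells meeting `F` comparable to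
`R ^ (-s)`, which gives `dimH F ≤ s` and, as `L(F_R)` is comparable to `N(R) * R`, the limit
`1 - s`.
-/

open Topology
open scoped ENNReal

theorem induction_on_scale {ρ c : ℝ} (hρ₀ : 0 < ρ) (hρ₁ : ρ < 1) {P : ℝ → Prop}
    (large : ∀ h, c ≤ h → P h)
    (step : ∀ h, 0 < h → h < c → (∀ h', h / ρ ≤ h' → P h') → P h) :
    ∀ h, 0 < h → P h := by
  have scale (n : ℕ) : ∀ h, 0 < h → c * ρ ^ n ≤ h → P h := by
    induction n with
    | zero => simpa using fun h _ => large h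
    | succ n ih =>
      intro h h₀ hh
      rcases le_or_gt c h with hc | hc
      · exact large h hc
      refine step h h₀ hc fun h' hh' => ih h' (lt_of_lt_of_le (by positivity) hh') ?_
      calc c * ρ ^ n = c * ρ ^ (n + 1) / ρ := by field_simp; ring
        _ ≤ h / ρ := by gcongr
        _ ≤ h' := hh'
  intro h h₀
  rcases le_or_gt c 0 with hc | hc
  · exact large h (hc.trans h₀.le)
  obtain ⟨n, hn⟩ := exists_pow_lt_of_lt_one (div_pos h₀ hc) hρ₁
  exact scale n h h₀ (by rw [lt_div_iff₀' hc] at hn; exact hn.le)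

theorem eq_add_mul_of_abs_sub_eq {ψ : ℝ → ℝ} {r : ℝ} (hψ : ∀ x y, |ψ x - ψ y| = r * |x - y|)
    (h01 : ψ 0 < ψ 1) (x : ℝ) : ψ x = ψ 0 + r * x := by
  have hr : ψ 1 = ψ 0 + r := by
    have := hψ 1 0
    rw [abs_of_pos (sub_pos.2 h01)] at this
    norm_num at this
    linarith
  have hsq (y : ℝ) : (ψ x - ψ y) ^ 2 = r ^ 2 * (x - y) ^ 2 := by
    rw [← sq_abs, hψ, mul_pow, sq_abs]
  have hsq₁ := hsq 1
  rw [hr] at hsq₁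
  have : r * (ψ x - ψ 0 - r * x) = 0 := by linear_combination (hsq 0 - hsq₁) / 2
  have hr₀ : r ≠ 0 := by linarith
  linarith [(mul_eq_zero.1 this).resolve_left hr₀]

theorem tendsto_log_div_log_of_le_of_le {V : ℝ → ℝ} {a A κ : ℝ} (ha : 0 < a)
    (hlo : ∀ᶠ R in 𝓝[>] 0, a * R ^ κ ≤ V R) (hhi : ∀ᶠ R in 𝓝[>] 0, V R ≤ A * R ^ κ) :
    Tendsto (fun R => Real.log (V R) / Real.log R) (𝓝[>] 0) (𝓝 κ) := by
  have hlog : Tendsto Real.log (𝓝[>] 0) atBot := Real.tendsto_log_nhdsGT_zero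
  have shift (C : ℝ) : Tendsto (fun R => κ + Real.log C / Real.log R) (𝓝[>] 0) (𝓝 κ) := by
    simpa using (tendsto_const_nhds.div_atBot hlog).const_add κ
  have hsmall : ∀ᶠ R in 𝓝[>] (0 : ℝ), R ∈ Ioo 0 1 := Ioo_mem_nhdsGT one_pos
  have key {C : ℝ} {R : ℝ} (hR : R ∈ Ioo (0 : ℝ) 1) (hC : 0 < C) :
      Real.log (C * R ^ κ) / Real.log R = κ + Real.log C / Real.log R := by
    have := (Real.log_neg hR.1 hR.2).ne
    rw [Real.log_mul hC.ne' (Real.rpow_pos_of_pos hR.1 κ).ne', Real.log_rpow hR.1]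
    field_simp
    ring
  refine tendsto_of_tendsto_of_tendsto_of_le_of_le' (shift A) (shift a) ?_ ?_
  · filter_upwards [hsmall, hlo, hhi] with R hR hlo hhi
    have hRκ := Real.rpow_pos_of_pos hR.1 κ
    have hV : 0 < V R := (mul_pos ha hRκ).trans_le hlo
    have hA : 0 < A := pos_of_mul_pos_left (hV.trans_le hhi) hRκ.le
    rw [← key hR hA]
    exact div_le_div_of_nonpos_of_le (Real.log_neg hR.1 hR.2).le
      (Real.log_le_log hV hhi)
  · filter_upwards [hsmall, hlo] with R hR hlo
    rw [← key hR ha]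
    exact div_le_div_of_nonpos_of_le (Real.log_neg hR.1 hR.2).le
      (Real.log_le_log (mul_pos ha (Real.rpow_pos_of_pos hR.1 κ)) hlo)

section GridCells

open Finset Function

variable {E : Set ℝ} {R : ℝ}

def gridCell (R : ℝ) (k : ℤ) : Set ℝ := Ico (k * R) ((k + 1) * R)

/-- Only the cells covering `[0, 1]` are enumerated, so these are the cells meeting `E` only
when `E ⊆ [0, 1]`. -/
def gridCells (E : Set ℝ) (R : ℝ) : Finset ℤ :=
  (Finset.Icc 0 ⌊R⁻¹⌋).filter fun k => (E ∩ gridCell R k).Nonempty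

lemma pairwise_disjoint_gridCell (R : ℝ) : Pairwise (Disjoint on gridCell R) := by
  intro i j hij
  simpa [onFun, gridCell, zsmul_eq_mul, add_mul] using pairwise_disjoint_Ico_add_zsmul (0 : ℝ) R hij

lemma volume_gridCell (R : ℝ) (k : ℤ) : volume (gridCell R k) = ENNReal.ofReal R := by
  rw [gridCell, Real.volume_Ico]; ring_nf

lemma ediam_gridCell (R : ℝ) (k : ℤ) : Metric.ediam (gridCell R k) = ENNReal.ofReal R := by
  rw [gridCell, Real.ediam_Ico]; ring_nf

lemma exists_mem_gridCells (hE : E ⊆ Icc 0 1) (hR : 0 < R) {x : ℝ} (hx : x ∈ E) :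
    ∃ k ∈ gridCells E R, x ∈ gridCell R k := by
  have hx₀₁ := hE hx
  have hmem : x ∈ gridCell R ⌊x / R⌋ := by
    constructor
    · rw [← le_div_iff₀ hR]; exact Int.floor_le _
    · rw [← div_lt_iff₀ hR]; exact Int.lt_floor_add_one _
  refine ⟨⌊x / R⌋, mem_filter.2 ⟨mem_Icc.2 ⟨?_, ?_⟩, x, hx, hmem⟩, hmem⟩
  · exact Int.floor_nonneg.2 (div_nonneg hx₀₁.1 hR.le)
  · rw [← one_div]; gcongr; exact hx₀₁.2

lemma subset_biUnion_gridCells (hE : E ⊆ Icc 0 1) (hR : 0 < R) :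
    E ⊆ ⋃ k ∈ gridCells E R, gridCell R k := by
  intro x hx
  obtain ⟨k, hk, hxk⟩ := exists_mem_gridCells hE hR hx
  exact mem_biUnion hk hxk

lemma ball_subset_biUnion_gridCell {x : ℝ} {k : ℤ} (hx : x ∈ gridCell R k) :
    Metric.ball x R ⊆ ⋃ j ∈ ({-1, 0, 1} : Finset ℤ), gridCell R (k + j) := by
  intro y hy
  rw [Real.ball_eq_Ioo] at hy
  obtain ⟨hxk, hxk'⟩ := hx
  have cell (j : ℤ) (hj : j ∈ ({-1, 0, 1} : Finset ℤ)) (h₁ : (k + j) * R ≤ y)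
      (h₂ : y < (k + j + 1) * R) : y ∈ ⋃ j ∈ ({-1, 0, 1} : Finset ℤ), gridCell R (k + j) :=
    mem_iUnion₂.2 ⟨j, hj, by simpa [gridCell] using And.intro h₁ h₂⟩
  rcases lt_or_ge y (k * R) with h | h
  · exact cell (-1) (by simp) (by push_cast; linarith [hy.1]) (by push_cast; linarith)
  rcases lt_or_ge y ((k + 1) * R) with h' | h'
  · exact cell 0 (by simp) (by simpa using h) (by simpa using h')
  · exact cell 1 (by simp) (by push_cast; linarith) (by push_cast; linarith [hy.2])

variable (μ : Measure ℝ) [IsFiniteMeasure μ]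

lemma sum_measureReal_gridCell_add_le (R : ℝ) (T : Finset ℤ) (j : ℤ) :
    ∑ k ∈ T, μ.real (gridCell R (k + j)) ≤ μ.real univ :=
  calc ∑ k ∈ T, μ.real (gridCell R (k + j)) = μ.real (⋃ k ∈ T, gridCell R (k + j)) :=
        (measureReal_biUnion_finset (((pairwise_disjoint_gridCell R).comp_of_injective
          (add_left_injective j)).set_pairwise _) fun _ _ => measurableSet_Ico).symm
    _ ≤ μ.real univ := measureReal_mono (subset_univ _)

lemma card_gridCells_mul_le {a : ℝ} (ha : ∀ x ∈ E, a ≤ μ.real (Metric.ball x R)) :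
    (#(gridCells E R) : ℝ) * a ≤ 3 * μ.real univ := by
  have hball (k) (hk : k ∈ gridCells E R) :
      a ≤ ∑ j ∈ ({-1, 0, 1} : Finset ℤ), μ.real (gridCell R (k + j)) := by
    obtain ⟨x, hxE, hxk⟩ := (mem_filter.1 hk).2
    exact (ha x hxE).trans ((measureReal_mono (ball_subset_biUnion_gridCell hxk)
      (measure_ne_top μ _)).trans
      (measureReal_biUnion_finset_le _ _))
  calc (#(gridCells E R) : ℝ) * a = ∑ _k ∈ gridCells E R, a := by simp [mul_comm]
    _ ≤ ∑ k ∈ gridCells E R, ∑ j ∈ ({-1, 0, 1} : Finset ℤ), μ.real (gridCell R (k + j)) :=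
      sum_le_sum hball
    _ = ∑ j ∈ ({-1, 0, 1} : Finset ℤ), ∑ k ∈ gridCells E R, μ.real (gridCell R (k + j)) :=
      sum_comm
    _ ≤ ∑ _j ∈ ({-1, 0, 1} : Finset ℤ), μ.real univ :=
      sum_le_sum fun j _ => sum_measureReal_gridCell_add_le μ R _ j
    _ = 3 * μ.real univ := by simp

lemma measureReal_le_card_gridCells_mul (hE : E ⊆ Icc 0 1) (hR : 0 < R) {b : ℝ}
    (hb : ∀ k, μ.real (gridCell R k) ≤ b) : μ.real E ≤ #(gridCells E R) * b :=
  calc μ.real E ≤ μ.real (⋃ k ∈ gridCells E R, gridCell R k) :=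
        measureReal_mono (subset_biUnion_gridCells hE hR) (measure_ne_top μ _)
    _ ≤ ∑ k ∈ gridCells E R, μ.real (gridCell R k) := measureReal_biUnion_finset_le _ _
    _ ≤ #(gridCells E R) * b := by simpa using sum_le_card_nsmul _ _ _ fun k _ => hb k

lemma card_gridCells_mul_le_volumeReal (hE : Bornology.IsBounded E) (hR : 0 ≤ R) :
    #(gridCells E R) * R ≤ volume.real (Metric.cthickening R E) := by
  have hcell (k) (hk : k ∈ gridCells E R) : gridCell R k ⊆ Metric.cthickening R E := by
    obtain ⟨x, hxE, hxk⟩ := (mem_filter.1 hk).2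
    intro y ⟨hyk, hyk'⟩
    apply Metric.closedBall_subset_cthickening hxE R
    rw [Real.closedBall_eq_Icc]
    obtain ⟨hxk, hxk'⟩ := hxk
    constructor <;> linarith
  calc (#(gridCells E R) : ℝ) * R = ∑ k ∈ gridCells E R, volume.real (gridCell R k) := by
        simp [measureReal_def, volume_gridCell, ENNReal.toReal_ofReal hR, mul_comm]
    _ = volume.real (⋃ k ∈ gridCells E R, gridCell R k) :=
        (measureReal_biUnion_finset ((pairwise_disjoint_gridCell R).set_pairwise _)
          (fun _ _ => measurableSet_Ico) fun k _ => by simp [volume_gridCell]).symm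
    _ ≤ volume.real (Metric.cthickening R E) :=
        measureReal_mono (iUnion₂_subset hcell) hE.cthickening.measure_lt_top.ne

lemma volumeReal_cthickening_le (hEc : IsCompact E) (hE : E ⊆ Icc 0 1) (hR : 0 < R) :
    volume.real (Metric.cthickening R E) ≤ #(gridCells E R) * (3 * R) := by
  have hcover : Metric.cthickening R E ⊆ ⋃ k ∈ gridCells E R, Icc (k * R - R) (k * R + 2 * R) := by
    rw [hEc.cthickening_eq_biUnion_closedBall hR.le]
    refine iUnion₂_subset fun x hx => ?_
    obtain ⟨k, hk, hxk, hxk'⟩ := exists_mem_gridCells hE hR hx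
    intro y hy
    rw [Real.closedBall_eq_Icc] at hy
    exact mem_biUnion hk ⟨by linarith [hy.1], by linarith [hy.2]⟩
  calc volume.real (Metric.cthickening R E)
      ≤ volume.real (⋃ k ∈ gridCells E R, Icc (k * R - R) (k * R + 2 * R)) :=
        measureReal_mono hcover (measure_biUnion_lt_top (finite_toSet _)
          fun _ _ => measure_Icc_lt_top).ne
    _ ≤ ∑ k ∈ gridCells E R, volume.real (Icc (k * R - R) (k * R + 2 * R)) :=
        measureReal_biUnion_finset_le _ _
    _ = ∑ _k ∈ gridCells E R, 3 * R := sum_congr rfl fun k _ => by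
        rw [Real.volume_real_Icc_of_le (by linarith)]; ring
    _ = #(gridCells E R) * (3 * R) := by simp

lemma dimH_le_of_card_gridCells_mul_rpow_le (hE : E ⊆ Icc 0 1) {s C : ℝ} (hs : 0 ≤ s)
    (hC : ∀ᶠ R in 𝓝[>] 0, #(gridCells E R) * R ^ s ≤ C) : dimH E ≤ ENNReal.ofReal s := by
  have hμH : μH[s] E ≤ ENNReal.ofReal C := by
    refine (Measure.hausdorffMeasure_le_liminf_sum (ι := fun R => gridCells E R) (l := 𝓝[>] 0)
      s E ENNReal.ofReal ?_ (fun R k => gridCell R k) ?_ ?_).trans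
      (liminf_le_of_frequently_le' ?_)
    · simpa using ENNReal.tendsto_ofReal
        ((tendsto_id (x := 𝓝 (0 : ℝ))).mono_left nhdsWithin_le_nhds)
    · exact Eventually.of_forall fun R k => (ediam_gridCell R k).le
    · filter_upwards [self_mem_nhdsWithin] with R hR
      intro x hx
      obtain ⟨k, hk, hxk⟩ := exists_mem_gridCells hE hR hx
      exact mem_iUnion.2 ⟨⟨k, hk⟩, hxk⟩
    · refine (hC.and self_mem_nhdsWithin).frequently.mono fun R ⟨hRC, hR⟩ => ?_
      rw [Finset.sum_coe_sort (gridCells E R) fun k => Metric.ediam (gridCell R k) ^ s]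
      simp only [ediam_gridCell, sum_const, nsmul_eq_mul]
      rw [ENNReal.ofReal_rpow_of_nonneg (le_of_lt hR) hs, ← ENNReal.ofReal_natCast,
        ← ENNReal.ofReal_mul (Nat.cast_nonneg _)]
      exact ENNReal.ofReal_le_ofReal hRC
  refine dimH_le_of_hausdorffMeasure_ne_top (d := s.toNNReal) ?_
  rw [Real.coe_toNNReal _ hs]
  exact ne_top_of_le_ne_top ENNReal.ofReal_ne_top hμH

end GridCells

theorem le_dimH_of_measure_Icc_le {μ : Measure ℝ} {E : Set ℝ} {s c : ℝ} (hs : 0 ≤ s) (hc : 0 < c)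
    (hE : μ E ≠ 0) (hμ : ∀ x y, x ≤ y → μ (Icc x y) ≤ ENNReal.ofReal (((y - x) / c) ^ s)) :
    ENNReal.ofReal s ≤ dimH E := by
  have hle : ENNReal.ofReal (c ^ s) • μ ≤ μH[s] := by
    refine Measure.le_hausdorffMeasure s _ 1 one_pos fun A hA => ?_
    have hA : Bornology.IsBounded A :=
      Metric.isBounded_iff_ediam_ne_top.2 (ne_top_of_le_ne_top ENNReal.one_ne_top hA)
    have hd : 0 ≤ sSup A - sInf A := sub_nonneg.2 (Real.sInf_le_sSup A hA.bddBelow hA.bddAbove)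
    rw [Measure.smul_apply, smul_eq_mul, Real.ediam_eq hA, ENNReal.ofReal_rpow_of_nonneg hd hs]
    calc ENNReal.ofReal (c ^ s) * μ A
        ≤ ENNReal.ofReal (c ^ s) * ENNReal.ofReal (((sSup A - sInf A) / c) ^ s) := by
          gcongr
          exact (measure_mono hA.subset_Icc_sInf_sSup).trans
            (hμ _ _ (Real.sInf_le_sSup A hA.bddBelow hA.bddAbove))
      _ = ENNReal.ofReal ((sSup A - sInf A) ^ s) := by
          rw [← ENNReal.ofReal_mul (by positivity), Real.div_rpow hd hc.le]
          field_simp [(Real.rpow_pos_of_pos hc s).ne']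
  have hμH : μH[s] E ≠ 0 := by
    refine fun h => hE ?_
    have := (hle E).trans_eq h
    rw [Measure.smul_apply, smul_eq_mul, nonpos_iff_eq_zero, mul_eq_zero] at this
    exact this.resolve_left (by simpa using Real.rpow_pos_of_pos hc s)
  exact le_dimH_of_hausdorffMeasure_ne_zero (d := s.toNNReal) (by rwa [Real.coe_toNNReal _ hs])

/-- The maps `x ↦ b i + r i * x`, `i < m`, sending `[0, 1]` onto disjoint intervals
`[b i, b i + r i] ⊆ [0, 1]` ordered by `i`, together with their similarity dimension `s`. -/
structure MoranSystem where
  m : ℕ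
  two_le_m : 2 ≤ m
  b : ℕ → ℝ
  r : ℕ → ℝ
  s : ℝ
  r_pos : ∀ i < m, 0 < r i
  r_lt_one : ∀ i < m, r i < 1
  b_nonneg : ∀ i < m, 0 ≤ b i
  b_add_r_le_one : ∀ i < m, b i + r i ≤ 1
  b_add_r_lt : ∀ i, i + 1 < m → b i + r i < b (i + 1)
  s_pos : 0 < s
  sum_rpow : ∑ i ∈ Finset.range m, r i ^ s = 1

namespace MoranSystem

open Finset Metric

variable (S : MoranSystem)

def ψ (i : ℕ) (x : ℝ) : ℝ := S.b i + S.r i * x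

def IsAttractor (F : Set ℝ) : Prop :=
  IsCompact F ∧ F.Nonempty ∧ F = ⋃ i ∈ range S.m, S.ψ i '' F

def weight (i : ℕ) : ℝ := S.r i ^ S.s

lemma weight_pos {i : ℕ} (hi : i < S.m) : 0 < S.weight i := Real.rpow_pos_of_pos (S.r_pos i hi) _

lemma sum_weight : ∑ i ∈ range S.m, S.weight i = 1 := S.sum_rpow

lemma nonempty_range : (range S.m).Nonempty := nonempty_range_iff.2 (by linarith [S.two_le_m])

lemma exists_r_le : ∃ ρ, 0 < ρ ∧ ρ < 1 ∧ ∀ i < S.m, S.r i ≤ ρ := by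
  obtain ⟨j, hj, hmax⟩ := (range S.m).exists_max_image S.r S.nonempty_range
  have hj := mem_range.1 hj
  exact ⟨S.r j, S.r_pos j hj, S.r_lt_one j hj, fun i hi => hmax i (mem_range.2 hi)⟩

lemma exists_le_r : ∃ ε, 0 < ε ∧ ∀ i < S.m, ε ≤ S.r i := by
  obtain ⟨j, hj, hmin⟩ := (range S.m).exists_min_image S.r S.nonempty_range
  exact ⟨S.r j, S.r_pos j (mem_range.1 hj), fun i hi => hmin i (mem_range.2 hi)⟩

def GapBound (g : ℝ) : Prop := 0 < g ∧ ∀ i, i + 1 < S.m → S.b i + S.r i + g ≤ S.b (i + 1)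

lemma exists_gapBound : ∃ g, S.GapBound g := by
  have hne : (range (S.m - 1)).Nonempty := nonempty_range_iff.2 (by have := S.two_le_m; omega)
  obtain ⟨j, hj, hmin⟩ := (range (S.m - 1)).exists_min_image
    (fun i => S.b (i + 1) - (S.b i + S.r i)) hne
  have hj : j + 1 < S.m := by have := mem_range.1 hj; omega
  refine ⟨S.b (j + 1) - (S.b j + S.r j), by linarith [S.b_add_r_lt j hj], fun i hi => ?_⟩
  linarith [hmin i (mem_range.2 (by omega))]

variable {S} in
lemma GapBound.add_le {g : ℝ} (hg : S.GapBound g) {i j : ℕ} (hij : i < j) (hj : j < S.m) :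
    S.b i + S.r i + g ≤ S.b j := by
  induction j with
  | zero => omega
  | succ k ih =>
    rcases Nat.lt_succ_iff_lt_or_eq.1 hij with h | rfl
    · linarith [ih h (by omega), hg.2 k hj, S.r_pos k (by omega), hg.1]
    · exact hg.2 i hj

def IsClamped (u : ℝ → ℝ) : Prop := (∀ x ≤ 0, u x = 0) ∧ ∀ x, 1 ≤ x → u x = 1

def clamp (x : ℝ) : ℝ := max 0 (min x 1)

lemma isClamped_clamp : IsClamped clamp :=
  ⟨fun x hx => max_eq_left (min_le_of_left_le hx), fun x hx => by simp [clamp, hx]⟩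

lemma monotone_clamp : Monotone clamp := fun _ _ h => max_le_max le_rfl (min_le_min h le_rfl)

lemma IsClamped.mem_Icc {u : ℝ → ℝ} (hu : IsClamped u) (hmono : Monotone u) (x : ℝ) :
    u x ∈ Set.Icc 0 1 :=
  ⟨hu.1 _ (min_le_right x 0) ▸ hmono (min_le_left x 0),
    hu.2 _ (le_max_right x 1) ▸ hmono (le_max_left x 1)⟩

def transfer (u : ℝ → ℝ) (x : ℝ) : ℝ := ∑ i ∈ range S.m, S.weight i * u ((x - S.b i) / S.r i)

lemma IsClamped.transfer {u : ℝ → ℝ} (hu : IsClamped u) : IsClamped (S.transfer u) := by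
  constructor
  · intro x hx
    refine sum_eq_zero fun i hi => ?_
    have hi := mem_range.1 hi
    rw [hu.1 _ (div_nonpos_of_nonpos_of_nonneg (by linarith [S.b_nonneg i hi])
      (S.r_pos i hi).le), mul_zero]
  · intro x hx
    refine (sum_congr rfl fun i hi => ?_).trans S.sum_weight
    have hi := mem_range.1 hi
    rw [hu.2 _ (by rw [le_div_iff₀ (S.r_pos i hi)]; linarith [S.b_add_r_le_one i hi]), mul_one]

lemma monotone_transfer {u : ℝ → ℝ} (hu : Monotone u) : Monotone (S.transfer u) :=
  fun x y hxy => sum_le_sum fun i hi => by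
    have hi := mem_range.1 hi
    exact mul_le_mul_of_nonneg_left
      (hu (div_le_div_of_nonneg_right (by linarith) (S.r_pos i hi).le)) (S.weight_pos hi).le

/-- Clamped functions only see the part of `[x, y]` inside each interval `[b i, b i + r i]`,
and an interval shorter than the gaps meets at most one of them. -/
lemma abs_transfer_sub_le {u v : ℝ → ℝ} (hu : IsClamped u) (hv : IsClamped v) {g : ℝ}
    (hg : S.GapBound g) {x y C : ℝ} (hxy : x ≤ y) (hyx : y - x < g) (hC : 0 ≤ C)
    (hterm : ∀ i < S.m, x < S.b i + S.r i → S.b i < y →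
      S.weight i * |u ((y - S.b i) / S.r i) - v ((x - S.b i) / S.r i)| ≤ C) :
    |S.transfer u y - S.transfer v x| ≤ C := by
  set d := fun i => S.weight i * (u ((y - S.b i) / S.r i) - v ((x - S.b i) / S.r i))
  have hsum : S.transfer u y - S.transfer v x = ∑ i ∈ range S.m, d i := by
    simp only [transfer, d, ← sum_sub_distrib, mul_sub]
  have hinactive (i : ℕ) (hi : i < S.m) (h : y ≤ S.b i ∨ S.b i + S.r i ≤ x) : d i = 0 := by
    have hr := S.r_pos i hi
    rcases h with h | h
    · simp only [d]
      rw [hu.1 _ (div_nonpos_of_nonpos_of_nonneg (by linarith) hr.le),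
        hv.1 _ (div_nonpos_of_nonpos_of_nonneg (by linarith) hr.le)]
      ring
    · simp only [d]
      rw [hu.2 _ (by rw [le_div_iff₀ hr]; linarith),
        hv.2 _ (by rw [le_div_iff₀ hr]; linarith)]
      ring
  rw [hsum]
  by_cases hactive : ∃ i < S.m, x < S.b i + S.r i ∧ S.b i < y
  · obtain ⟨i, hi, hxi, hiy⟩ := hactive
    rw [sum_eq_single_of_mem i (mem_range.2 hi) fun j hj hji => hinactive j (mem_range.1 hj) ?_,
      abs_mul, abs_of_pos (S.weight_pos hi)]
    · exact hterm i hi hxi hiy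
    by_contra! h
    rcases lt_or_gt_of_ne hji with hlt | hlt
    · linarith [hg.add_le hlt hi]
    · linarith [hg.add_le hlt (mem_range.1 hj)]
  · push Not at hactive
    rw [sum_eq_zero fun i hi => hinactive i (mem_range.1 hi) ?_, abs_zero]
    · exact hC
    by_contra! h
    exact absurd (hactive i (mem_range.1 hi) h.2) (not_le.2 h.1)

lemma isClamped_iterate (n : ℕ) : IsClamped (S.transfer^[n] clamp) := by
  induction n with
  | zero => exact isClamped_clamp
  | succ n ih => rw [Function.iterate_succ_apply']; exact ih.transfer S

lemma monotone_iterate (n : ℕ) : Monotone (S.transfer^[n] clamp) := by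
  induction n with
  | zero => exact monotone_clamp
  | succ n ih => rw [Function.iterate_succ_apply']; exact S.monotone_transfer ih

lemma abs_iterate_succ_sub_le {ρ : ℝ} (hρ₀ : 0 ≤ ρ) (hρ : ∀ i < S.m, S.r i ≤ ρ) (n : ℕ)
    (x : ℝ) :
    |S.transfer^[n + 1] clamp x - S.transfer^[n] clamp x| ≤ (ρ ^ S.s) ^ n := by
  obtain ⟨g, hg⟩ := S.exists_gapBound
  induction n generalizing x with
  | zero =>
    have h₁ := (S.isClamped_iterate 1).mem_Icc (S.monotone_iterate 1) x
    have h₀ := (S.isClamped_iterate 0).mem_Icc (S.monotone_iterate 0) x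
    rw [pow_zero, abs_le]
    constructor <;> linarith [h₁.1, h₁.2, h₀.1, h₀.2]
  | succ n ih =>
    simp only [Function.iterate_succ_apply'] at ih ⊢
    have hn := S.isClamped_iterate n
    refine S.abs_transfer_sub_le (hn.transfer S) hn hg le_rfl (by simpa using hg.1)
      (by positivity) fun i hi _ _ => ?_
    rw [pow_succ']
    exact mul_le_mul (Real.rpow_le_rpow (S.r_pos i hi).le (hρ i hi) S.s_pos.le) (ih _)
      (abs_nonneg _) (by positivity)

def cdf (x : ℝ) : ℝ := limUnder atTop fun n => S.transfer^[n] clamp x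

lemma tendsto_iterate_cdf (x : ℝ) :
    Tendsto (fun n => S.transfer^[n] clamp x) atTop (nhds (S.cdf x)) := by
  obtain ⟨ρ, hρ₀, hρ₁, hρ⟩ := S.exists_r_le
  refine (cauchySeq_of_le_geometric (ρ ^ S.s) 1 (Real.rpow_lt_one hρ₀.le hρ₁ S.s_pos)
    fun n => ?_).tendsto_limUnder
  rw [one_mul, Real.dist_eq, abs_sub_comm]
  exact S.abs_iterate_succ_sub_le hρ₀.le hρ n x

lemma isClamped_cdf : IsClamped S.cdf :=
  ⟨fun x hx => tendsto_nhds_unique (S.tendsto_iterate_cdf x)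
      (by simp [(S.isClamped_iterate _).1 x hx]),
    fun x hx => tendsto_nhds_unique (S.tendsto_iterate_cdf x)
      (by simp [(S.isClamped_iterate _).2 x hx])⟩

lemma monotone_cdf : Monotone S.cdf := fun x y hxy =>
  le_of_tendsto_of_tendsto' (S.tendsto_iterate_cdf x) (S.tendsto_iterate_cdf y)
    fun n => S.monotone_iterate n hxy

lemma transfer_cdf : S.transfer S.cdf = S.cdf := by
  funext x
  refine tendsto_nhds_unique ?_ ((S.tendsto_iterate_cdf x).comp (tendsto_add_atTop_nat 1))
  simp only [Function.comp_def, Function.iterate_succ_apply']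
  exact tendsto_finsetSum _ fun i _ => (S.tendsto_iterate_cdf _).const_mul _

lemma cdf_sub_le {g : ℝ} (hg : S.GapBound g) {x y : ℝ} (hxy : x ≤ y) :
    S.cdf y - S.cdf x ≤ ((y - x) / g) ^ S.s := by
  obtain ⟨ρ, hρ₀, hρ₁, hρ⟩ := S.exists_r_le
  rcases hxy.eq_or_lt with rfl | hlt
  · simp [Real.zero_rpow S.s_pos.ne']
  have key := induction_on_scale hρ₀ hρ₁ (c := g)
    (P := fun h => ∀ x, S.cdf (x + h) - S.cdf x ≤ (h / g) ^ S.s) ?large ?step (y - x)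
    (by linarith) x
  · simpa using key
  case large =>
    intro h hh x
    have h₁ := S.isClamped_cdf.mem_Icc S.monotone_cdf (x + h)
    have h₀ := S.isClamped_cdf.mem_Icc S.monotone_cdf x
    linarith [h₁.2, h₀.1, Real.one_le_rpow ((one_le_div hg.1).2 hh) S.s_pos.le]
  case step =>
    intro h h₀ hhg ih x
    have := hg.1
    rw [← S.transfer_cdf, ← abs_of_nonneg (sub_nonneg.2 (S.monotone_transfer S.monotone_cdf
      (le_add_of_nonneg_right h₀.le)))]
    refine S.abs_transfer_sub_le S.isClamped_cdf S.isClamped_cdf hg (by linarith) (by simpa)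
      (by positivity) fun i hi _ _ => ?_
    have hr := S.r_pos i hi
    have harg : (x + h - S.b i) / S.r i = (x - S.b i) / S.r i + h / S.r i := by ring
    rw [harg, abs_of_nonneg (sub_nonneg.2 (S.monotone_cdf (by linarith [div_pos h₀ hr])))]
    calc S.weight i * (S.cdf ((x - S.b i) / S.r i + h / S.r i) - S.cdf ((x - S.b i) / S.r i))
        ≤ S.weight i * ((h / S.r i) / g) ^ S.s :=
          mul_le_mul_of_nonneg_left (ih _ (div_le_div_of_nonneg_left h₀.le hr (hρ i hi)) _)
            (S.weight_pos hi).le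
      _ = (h / g) ^ S.s := by
          rw [weight, show h / S.r i / g = h / g / S.r i by ring,
            Real.div_rpow (by positivity) hr.le]
          field_simp [(Real.rpow_pos_of_pos hr S.s).ne']

lemma continuous_cdf : Continuous S.cdf := by
  obtain ⟨g, hg⟩ := S.exists_gapBound
  have habs (x y : ℝ) : dist (S.cdf y) (S.cdf x) ≤ (|y - x| / g) ^ S.s := by
    rw [Real.dist_eq]
    rcases le_total x y with h | h
    · rw [abs_of_nonneg (sub_nonneg.2 (S.monotone_cdf h)), abs_of_nonneg (sub_nonneg.2 h)]
      exact S.cdf_sub_le hg h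
    · rw [abs_sub_comm, abs_of_nonneg (sub_nonneg.2 (S.monotone_cdf h)), abs_sub_comm,
        abs_of_nonneg (sub_nonneg.2 h)]
      exact S.cdf_sub_le hg h
  refine continuous_iff_continuousAt.2 fun x => tendsto_iff_dist_tendsto_zero.2 ?_
  refine squeeze_zero (fun y => dist_nonneg) (fun y => habs x y) ?_
  have hbound : Continuous fun y => (|y - x| / g) ^ S.s :=
    (by fun_prop : Continuous fun y => |y - x| / g).rpow_const fun _ => Or.inr S.s_pos.le
  simpa [Real.zero_rpow S.s_pos.ne'] using hbound.tendsto x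

def cdfStieltjes : StieltjesFunction ℝ where
  toFun := S.cdf
  mono' := S.monotone_cdf
  right_continuous' _ := S.continuous_cdf.continuousWithinAt

def measure : Measure ℝ := S.cdfStieltjes.measure

lemma tendsto_cdf_atBot : Tendsto S.cdf atBot (nhds 0) :=
  tendsto_const_nhds.congr' <| (eventually_le_atBot 0).mono fun x hx =>
    (S.isClamped_cdf.1 x hx).symm

lemma tendsto_cdf_atTop : Tendsto S.cdf atTop (nhds 1) :=
  tendsto_const_nhds.congr' <| (eventually_ge_atTop 1).mono fun x hx =>
    (S.isClamped_cdf.2 x hx).symm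

instance : IsProbabilityMeasure S.measure :=
  S.cdfStieltjes.isProbabilityMeasure S.tendsto_cdf_atBot S.tendsto_cdf_atTop

lemma leftLim_cdf (x : ℝ) : Function.leftLim S.cdf x = S.cdf x :=
  leftLim_eq_of_tendsto ((S.continuous_cdf.tendsto x).mono_left nhdsWithin_le_nhds)

lemma measure_Icc (x y : ℝ) : S.measure (Icc x y) = ENNReal.ofReal (S.cdf y - S.cdf x) := by
  rw [measure, StieltjesFunction.measure_Icc]
  exact congrArg (fun t => ENNReal.ofReal (S.cdf y - t)) (S.leftLim_cdf x)

lemma measure_Ioo (x y : ℝ) : S.measure (Ioo x y) = ENNReal.ofReal (S.cdf y - S.cdf x) := by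
  rw [measure, StieltjesFunction.measure_Ioo]
  exact congrArg (fun t => ENNReal.ofReal (t - S.cdf x)) (S.leftLim_cdf y)

lemma measure_Iic (x : ℝ) : S.measure (Iic x) = ENNReal.ofReal (S.cdf x) := by
  rw [measure, StieltjesFunction.measure_Iic _ S.tendsto_cdf_atBot, sub_zero]
  rfl

lemma measurable_ψ (i : ℕ) : Measurable (S.ψ i) := by
  unfold ψ; fun_prop

lemma preimage_ψ_Iic {i : ℕ} (hi : i < S.m) (a : ℝ) :
    S.ψ i ⁻¹' Iic a = Iic ((a - S.b i) / S.r i) := by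
  ext x
  simp only [Set.mem_preimage, Set.mem_Iic, ψ, le_div_iff₀ (S.r_pos i hi)]
  constructor <;> intro h <;> linarith

lemma measure_eq_sum_map :
    S.measure = ∑ i ∈ range S.m, ENNReal.ofReal (S.weight i) • S.measure.map (S.ψ i) := by
  refine Measure.ext_of_Iic _ _ fun a => ?_
  have hnonneg (i) (hi : i ∈ range S.m) : 0 ≤ S.weight i * S.cdf ((a - S.b i) / S.r i) :=
    mul_nonneg (S.weight_pos (mem_range.1 hi)).le
      (S.isClamped_cdf.mem_Icc S.monotone_cdf _).1
  rw [Measure.finsetSum_apply, S.measure_Iic, ← S.transfer_cdf, transfer,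
    ENNReal.ofReal_sum_of_nonneg hnonneg]
  refine sum_congr rfl fun i hi => ?_
  rw [Measure.smul_apply, Measure.map_apply (S.measurable_ψ i) measurableSet_Iic,
    S.preimage_ψ_Iic (mem_range.1 hi), S.measure_Iic, smul_eq_mul,
    ENNReal.ofReal_mul (S.weight_pos (mem_range.1 hi)).le]

lemma sum_weight_mul_measure_preimage_le (A : Set ℝ) :
    ∑ i ∈ range S.m, ENNReal.ofReal (S.weight i) * S.measure (S.ψ i ⁻¹' A) ≤ S.measure A := by
  conv_rhs => rw [S.measure_eq_sum_map]
  rw [Measure.finsetSum_apply]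
  exact sum_le_sum fun i _ => mul_le_mul_right
    (Measure.le_map_apply (S.measurable_ψ i).aemeasurable A) _

lemma weight_mul_measure_le_measure_image {i : ℕ} (hi : i < S.m) (A : Set ℝ) :
    ENNReal.ofReal (S.weight i) * S.measure A ≤ S.measure (S.ψ i '' A) :=
  calc ENNReal.ofReal (S.weight i) * S.measure A
      ≤ ENNReal.ofReal (S.weight i) * S.measure (S.ψ i ⁻¹' (S.ψ i '' A)) :=
        mul_le_mul_right (measure_mono (subset_preimage_image _ _)) _
    _ ≤ ∑ j ∈ range S.m, ENNReal.ofReal (S.weight j) * S.measure (S.ψ j ⁻¹' (S.ψ i '' A)) :=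
        single_le_sum (f := fun j => ENNReal.ofReal (S.weight j) * S.measure (S.ψ j ⁻¹' _))
          (fun _ _ => zero_le) (mem_range.2 hi)
    _ ≤ S.measure (S.ψ i '' A) := S.sum_weight_mul_measure_preimage_le _

lemma measure_Icc_zero_one : S.measure (Set.Icc 0 1) = 1 := by
  rw [measure_Icc, S.isClamped_cdf.2 1 le_rfl, S.isClamped_cdf.1 0 le_rfl]
  simp

lemma measure_ball_of_one_le {x R : ℝ} (hx : x ∈ Set.Icc 0 1) (hR : 1 ≤ R) :
    S.measure (ball x R) = 1 := by
  refine le_antisymm prob_le_one ?_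
  calc (1 : ℝ≥0∞) = S.measure (Ioo 0 1) := by
        rw [measure_Ioo, S.isClamped_cdf.2 1 le_rfl, S.isClamped_cdf.1 0 le_rfl]; simp
    _ ≤ S.measure (ball x R) := by
        refine measure_mono fun y hy => ?_
        rw [Real.ball_eq_Ioo]
        constructor <;> linarith [hx.1, hx.2, hy.1, hy.2]

lemma dist_ψ {i : ℕ} (hi : i < S.m) (x y : ℝ) : dist (S.ψ i x) (S.ψ i y) = S.r i * dist x y := by
  rw [Real.dist_eq, Real.dist_eq, ψ, ψ,
    show S.b i + S.r i * x - (S.b i + S.r i * y) = S.r i * (x - y) by ring, abs_mul,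
    abs_of_pos (S.r_pos i hi)]

variable {S} {F : Set ℝ}

lemma IsAttractor.exists_eq_ψ (hF : S.IsAttractor F) {x : ℝ} (hx : x ∈ F) :
    ∃ i < S.m, ∃ y ∈ F, S.ψ i y = x := by
  rw [hF.2.2] at hx
  simpa using hx

lemma IsAttractor.ψ_mem (hF : S.IsAttractor F) {i : ℕ} (hi : i < S.m) {y : ℝ} (hy : y ∈ F) :
    S.ψ i y ∈ F := by
  rw [hF.2.2]
  exact mem_biUnion (mem_range.2 hi) (mem_image_of_mem _ hy)

lemma IsAttractor.subset_Icc (hF : S.IsAttractor F) : F ⊆ Set.Icc 0 1 := by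
  have hFc := hF.1
  have hFne := hF.2.1
  obtain ⟨i, hi, y, hy, hyF⟩ := hF.exists_eq_ψ (hFc.sInf_mem hFne)
  obtain ⟨j, hj, z, hz, hzF⟩ := hF.exists_eq_ψ (hFc.sSup_mem hFne)
  have hy' := csInf_le hFc.bddBelow hy
  have hz' := le_csSup hFc.bddAbove hz
  simp only [ψ] at hyF hzF
  have hinf : 0 ≤ sInf F := by
    nlinarith [S.b_nonneg i hi, S.r_lt_one i hi, S.r_pos i hi]
  have hsup : sSup F ≤ 1 := by
    nlinarith [S.b_add_r_le_one j hj, S.r_lt_one j hj, S.r_pos j hj]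
  exact fun x hx => ⟨hinf.trans (csInf_le hFc.bddBelow hx), (le_csSup hFc.bddAbove hx).trans hsup⟩

lemma IsAttractor.image_cthickening_subset (hF : S.IsAttractor F) {i : ℕ} (hi : i < S.m)
    {δ : ℝ} (hδ : 0 ≤ δ) : S.ψ i '' cthickening δ F ⊆ cthickening (S.r i * δ) F := by
  rw [hF.1.cthickening_eq_biUnion_closedBall hδ]
  rintro _ ⟨z, hz, rfl⟩
  obtain ⟨y, hy, hzy⟩ := mem_iUnion₂.1 hz
  apply closedBall_subset_cthickening (hF.ψ_mem hi hy)
  rw [mem_closedBall, S.dist_ψ hi]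
  exact mul_le_mul_of_nonneg_left hzy (S.r_pos i hi).le

lemma IsAttractor.one_le_measure_cthickening (hF : S.IsAttractor F) {δ : ℝ} (hδ : 0 < δ) :
    1 ≤ S.measure (cthickening δ F) := by
  obtain ⟨ρ, hρ₀, hρ₁, hρ⟩ := S.exists_r_le
  refine induction_on_scale hρ₀ hρ₁ (c := 1) (P := fun δ => 1 ≤ S.measure (cthickening δ F))
    (fun δ hδ => ?_) (fun δ hδ _ ih => ?_) δ hδ
  · obtain ⟨y, hy⟩ := hF.2.1
    have hy' := hF.subset_Icc hy
    rw [← S.measure_Icc_zero_one]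
    refine measure_mono fun x hx => mem_cthickening_of_dist_le x y δ F hy ?_
    rw [Real.dist_eq, abs_le]
    constructor <;> linarith [hx.1, hx.2, hy'.1, hy'.2]
  · have hpre (i : ℕ) (hi : i < S.m) : cthickening (δ / ρ) F ⊆ S.ψ i ⁻¹' cthickening δ F := by
      refine image_subset_iff.1 ((hF.image_cthickening_subset hi (by positivity)).trans
        (cthickening_mono ?_ F))
      rw [mul_div_assoc']
      exact div_le_of_le_mul₀ hρ₀.le hδ.le (by nlinarith [hρ i hi])
    calc (1 : ℝ≥0∞) = ∑ i ∈ range S.m, ENNReal.ofReal (S.weight i) * 1 := by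
          simp_rw [mul_one]
          rw [← ENNReal.ofReal_sum_of_nonneg fun i hi => (S.weight_pos (mem_range.1 hi)).le,
            S.sum_weight, ENNReal.ofReal_one]
      _ ≤ ∑ i ∈ range S.m, ENNReal.ofReal (S.weight i) * S.measure (S.ψ i ⁻¹' cthickening δ F) :=
          sum_le_sum fun i hi => mul_le_mul_right
            ((ih _ le_rfl).trans (measure_mono (hpre i (mem_range.1 hi)))) _
      _ ≤ S.measure (cthickening δ F) := S.sum_weight_mul_measure_preimage_le _

lemma IsAttractor.measure_eq_one (hF : S.IsAttractor F) : S.measure F = 1 := by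
  refine tendsto_nhds_unique ((tendsto_measure_cthickening_of_isCompact hF.1).mono_left
    (nhdsWithin_le_nhds (s := Ioi 0))) (tendsto_const_nhds.congr' ?_)
  filter_upwards [self_mem_nhdsWithin] with δ hδ
  exact le_antisymm (hF.one_le_measure_cthickening hδ) prob_le_one

/-- Frostman's lower bound: a point of `F` lies in some `ψ i '' F`, and zooming in by `ψ i`
multiplies the radius by `r i ≥ ε` and the mass by `weight i = r i ^ s`. -/
lemma IsAttractor.ofReal_rpow_le_measure_ball (hF : S.IsAttractor F) {ε : ℝ} (hε₀ : 0 < ε)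
    (hε : ∀ i < S.m, ε ≤ S.r i) {x : ℝ} (hx : x ∈ F) {R : ℝ} (hR₀ : 0 < R) (hR₁ : R ≤ 1) :
    ENNReal.ofReal ((ε * R) ^ S.s) ≤ S.measure (ball x R) := by
  obtain ⟨ρ, hρ₀, hρ₁, hρ⟩ := S.exists_r_le
  have h0 : 0 < S.m := by linarith [S.two_le_m]
  have hε₁ : ε ≤ 1 := (hε 0 h0).trans (S.r_lt_one 0 h0).le
  refine induction_on_scale hρ₀ hρ₁ (c := 1) (P := fun R => R ≤ 1 → ∀ x ∈ F,
    ENNReal.ofReal ((ε * R) ^ S.s) ≤ S.measure (ball x R)) (fun R h1 h1' x hx => ?_)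
    (fun R hR₀ _ ih _ x hx => ?_) R hR₀ hR₁ x hx
  · rw [le_antisymm h1' h1, mul_one, S.measure_ball_of_one_le (hF.subset_Icc hx) le_rfl]
    exact ENNReal.ofReal_le_one.2 (Real.rpow_le_one hε₀.le hε₁ S.s_pos.le)
  obtain ⟨i, hi, y, hy, rfl⟩ := hF.exists_eq_ψ hx
  have hr := S.r_pos i hi
  have hball : S.ψ i '' ball y (R / S.r i) ⊆ ball (S.ψ i y) R := by
    rintro _ ⟨z, hz, rfl⟩
    rw [mem_ball, lt_div_iff₀ hr] at hz
    rw [mem_ball, S.dist_ψ hi]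
    linarith
  refine le_trans ?_ ((S.weight_mul_measure_le_measure_image hi _).trans (measure_mono hball))
  rcases le_or_gt (R / S.r i) 1 with h | h
  · calc ENNReal.ofReal ((ε * R) ^ S.s)
        = ENNReal.ofReal (S.weight i) * ENNReal.ofReal ((ε * (R / S.r i)) ^ S.s) := by
          rw [← ENNReal.ofReal_mul (S.weight_pos hi).le, weight,
            ← Real.mul_rpow hr.le (by positivity)]
          congr 2
          field_simp
      _ ≤ _ := mul_le_mul_right
          (ih _ (div_le_div_of_nonneg_left hR₀.le hr (hρ i hi)) h y hy) _
  · rw [S.measure_ball_of_one_le (hF.subset_Icc hy) h.le, mul_one]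
    refine ENNReal.ofReal_le_ofReal (Real.rpow_le_rpow (by positivity) ?_ S.s_pos.le)
    nlinarith [hε i hi]

lemma IsAttractor.card_gridCells_mul_rpow_le (hF : S.IsAttractor F) {ε : ℝ} (hε₀ : 0 < ε)
    (hε : ∀ i < S.m, ε ≤ S.r i) {R : ℝ} (hR₀ : 0 < R) (hR₁ : R ≤ 1) :
    #(gridCells F R) * (ε * R) ^ S.s ≤ 3 := by
  simpa using card_gridCells_mul_le S.measure fun x hx =>
    (ENNReal.ofReal_le_iff_le_toReal (measure_ne_top _ _)).1
      (hF.ofReal_rpow_le_measure_ball hε₀ hε hx hR₀ hR₁)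

lemma IsAttractor.one_le_card_gridCells_mul_rpow (hF : S.IsAttractor F) {g : ℝ}
    (hg : S.GapBound g) {R : ℝ} (hR₀ : 0 < R) : 1 ≤ #(gridCells F R) * (R / g) ^ S.s := by
  have hF1 : S.measure.real F = 1 := by simp [Measure.real, hF.measure_eq_one]
  refine hF1 ▸ measureReal_le_card_gridCells_mul S.measure hF.subset_Icc hR₀ fun k => ?_
  calc S.measure.real (gridCell R k) ≤ S.measure.real (Icc (k * R) ((k + 1) * R)) :=
        measureReal_mono Ico_subset_Icc_self (measure_ne_top _ _)
    _ = S.cdf ((k + 1) * R) - S.cdf (k * R) := by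
        rw [Measure.real, measure_Icc, ENNReal.toReal_ofReal
          (sub_nonneg.2 (S.monotone_cdf (by nlinarith)))]
    _ ≤ (((k + 1) * R - k * R) / g) ^ S.s := S.cdf_sub_le hg (by nlinarith)
    _ = (R / g) ^ S.s := by ring_nf

theorem IsAttractor.dimH_eq (hF : S.IsAttractor F) : dimH F = ENNReal.ofReal S.s := by
  obtain ⟨ε, hε₀, hε⟩ := S.exists_le_r
  obtain ⟨g, hg⟩ := S.exists_gapBound
  refine le_antisymm (dimH_le_of_card_gridCells_mul_rpow_le hF.subset_Icc S.s_pos.le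
    (C := 3 / ε ^ S.s) ?_) (le_dimH_of_measure_Icc_le (μ := S.measure) S.s_pos.le hg.1
      (by simp [hF.measure_eq_one]) fun x y _ => ?_)
  · filter_upwards [Ioo_mem_nhdsGT one_pos] with R hR
    have := hF.card_gridCells_mul_rpow_le hε₀ hε hR.1 hR.2.le
    rw [Real.mul_rpow hε₀.le hR.1.le] at this
    rw [le_div_iff₀ (by positivity)]
    linarith
  · rw [S.measure_Icc]
    exact ENNReal.ofReal_le_ofReal (S.cdf_sub_le hg ‹_›)

theorem IsAttractor.tendsto_log_volume_cthickening (hF : S.IsAttractor F) :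
    Tendsto (fun R => Real.log (volume.real (cthickening R F)) / Real.log R) (𝓝[>] 0)
      (𝓝 (1 - S.s)) := by
  obtain ⟨ε, hε₀, hε⟩ := S.exists_le_r
  obtain ⟨g, hg⟩ := S.exists_gapBound
  have hsmall : ∀ᶠ R in 𝓝[>] (0 : ℝ), R ∈ Set.Ioo 0 1 := Ioo_mem_nhdsGT one_pos
  have hRs {R : ℝ} (hR : 0 < R) : R ^ (1 - S.s) = R / R ^ S.s := by
    rw [Real.rpow_sub hR, Real.rpow_one]
  refine tendsto_log_div_log_of_le_of_le (a := g ^ S.s) (A := 9 / ε ^ S.s)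
    (Real.rpow_pos_of_pos hg.1 _) ?_ ?_
  · filter_upwards [hsmall] with R hR
    have hcard := hF.one_le_card_gridCells_mul_rpow hg hR.1
    have hvol := card_gridCells_mul_le_volumeReal hF.1.isBounded hR.1.le
    have hgs := Real.rpow_pos_of_pos hg.1 S.s
    have hRs₀ := Real.rpow_pos_of_pos hR.1 S.s
    rw [Real.div_rpow hR.1.le hg.1.le, mul_div_assoc', le_div_iff₀ hgs, one_mul] at hcard
    calc g ^ S.s * R ^ (1 - S.s) = g ^ S.s / R ^ S.s * R := by rw [hRs hR.1]; ring
      _ ≤ #(gridCells F R) * R :=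
          mul_le_mul_of_nonneg_right ((div_le_iff₀ hRs₀).2 hcard) hR.1.le
      _ ≤ _ := hvol
  · filter_upwards [hsmall] with R hR
    have hcard := hF.card_gridCells_mul_rpow_le hε₀ hε hR.1 hR.2.le
    have hvol := volumeReal_cthickening_le hF.1 hF.subset_Icc hR.1
    have hεRs : 0 < ε ^ S.s * R ^ S.s :=
      mul_pos (Real.rpow_pos_of_pos hε₀ _) (Real.rpow_pos_of_pos hR.1 _)
    rw [Real.mul_rpow hε₀.le hR.1.le, ← le_div_iff₀ hεRs] at hcard
    calc volume.real (cthickening R F) ≤ #(gridCells F R) * (3 * R) := hvol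
      _ ≤ 3 / (ε ^ S.s * R ^ S.s) * (3 * R) := by gcongr; linarith [hR.1]
      _ = 9 / ε ^ S.s * R ^ (1 - S.s) := by
          rw [hRs hR.1]
          field_simp
          ring

end MoranSystem

theorem stmt_2_general (m : ℕ) (hm : 2 ≤ m) (ψ : ℕ → ℝ → ℝ) (ratio : ℕ → ℝ)
    (hratio : ∀ i, i < m → 0 < ratio i ∧ ratio i < 1)
    (hsim : ∀ i, i < m → ∀ x y : ℝ, |ψ i x - ψ i y| = ratio i * |x - y|)
    (hsub : ∀ i, i < m → ψ i '' Set.Icc 0 1 ⊆ Set.Icc 0 1)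
    (hord : ∀ i, i < m → ψ i 0 < ψ i 1)
    (hgap : ∀ i, i + 1 < m → ψ i 1 < ψ (i + 1) 0)
    (F : Set ℝ) (hFc : IsCompact F) (hFne : F.Nonempty)
    (hFattr : F = ⋃ i ∈ Finset.range m, ψ i '' F)
    (s : ℝ) (hs : 0 < s) (hsum : ∑ i ∈ Finset.range m, ratio i ^ s = 1) :
    dimH F = ENNReal.ofReal s ∧
    Filter.Tendsto
      (fun R : ℝ =>
        Real.log ((MeasureTheory.volume (Metric.cthickening R F)).toReal) / Real.log R)
      (nhdsWithin 0 (Set.Ioi 0)) (nhds (1 - s)) := by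
  have haff (i : ℕ) (hi : i < m) : ψ i = fun x => ψ i 0 + ratio i * x :=
    funext (eq_add_mul_of_abs_sub_eq (hsim i hi) (hord i hi))
  have hend (i : ℕ) (hi : i < m) : ψ i 1 = ψ i 0 + ratio i := by
    simpa using congrFun (haff i hi) 1
  let S : MoranSystem :=
    { m, b := fun i => ψ i 0, r := ratio, s
      two_le_m := hm
      r_pos := fun i hi => (hratio i hi).1
      r_lt_one := fun i hi => (hratio i hi).2
      b_nonneg := fun i hi => (hsub i hi ⟨0, left_mem_Icc.2 zero_le_one, rfl⟩).1
      b_add_r_le_one := fun i hi =>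
        hend i hi ▸ (hsub i hi ⟨1, right_mem_Icc.2 zero_le_one, rfl⟩).2
      b_add_r_lt := fun i hi => hend i (by omega) ▸ hgap i hi
      s_pos := hs
      sum_rpow := hsum }
  have hF : S.IsAttractor F := ⟨hFc, hFne, hFattr.trans <| iUnion₂_congr fun i hi => by
    rw [haff i (Finset.mem_range.1 hi)]; rfl⟩
  exact ⟨hF.dimH_eq, hF.tendsto_log_volume_cthickening⟩

/-- for a self-similar subset of `[0,1]` with disjoint ordered pieces,
the Hausdorff dimension equals the similarity dimension `s` (`Σ rᵢ^s = 1`), and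
`lim_{r→0⁺} log L(F_r)/log r = 1 - s`, so the Minkowski dimension is also `s`. -/
theorem stmt_2 (m : ℕ) (hm : 2 ≤ m) (ψ : ℕ → ℝ → ℝ) (ratio : ℕ → ℝ)
    (hratio : ∀ i, i < m → 0 < ratio i ∧ ratio i < 1)
    (hsim : ∀ i, i < m → ∀ x y : ℝ, |ψ i x - ψ i y| = ratio i * |x - y|)
    (hsub : ∀ i, i < m → ψ i '' Set.Icc 0 1 ⊆ Set.Icc 0 1)
    (hord : ∀ i, i < m → ψ i 0 < ψ i 1)
    (hgap : ∀ i, i + 1 < m → ψ i 1 < ψ (i + 1) 0)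
    (h0 : ψ 0 0 = 0) (h1 : ψ (m - 1) 1 = 1)
    (F : Set ℝ) (hFc : IsCompact F) (hFne : F.Nonempty)
    (hFattr : F = ⋃ i ∈ Finset.range m, ψ i '' F)
    (s : ℝ) (hs : 0 < s) (hsum : ∑ i ∈ Finset.range m, ratio i ^ s = 1) :
    dimH F = ENNReal.ofReal s ∧
    Filter.Tendsto
      (fun R : ℝ =>
        Real.log ((MeasureTheory.volume (Metric.cthickening R F)).toReal) / Real.log R)
      (nhdsWithin 0 (Set.Ioi 0)) (nhds (1 - s)) :=
  stmt_2_general m hm ψ ratio hratio hsim hsub hord hgap F hFc hFne hFattr s hs hsum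
end
end

section
/- Let μ be a non-atomic Borel probability measure on [0,1]. Given q < 0 and 0 < a ≤ b, there exist a constant c₂ > 0 and r₀ > 0 such that for all 0 < r ≤ r₀: Σ_{B ∈ B_r^*} μ(B̄^b)^q ≤ Σ_{B ∈ B_r^*} μ(B̄^a)^q ≤ c₂ · Σ_{B ∈ B_{ra/(2+b)}^*} μ(B̄^b)^q. -/
open MeasureTheory Filter Set
open scoped Classical

noncomputable section

/-!
Every `B ∈ B_R^*` meets some `B' ∈ B_r^*`, `r = R a / (2 + b)`, in a set of positive measure, and
this choice of `r` makes `B̄'^b ⊆ B̄^a`, so `μ(B̄^a)^q ≤ μ(B̄'^b)^q` as `q < 0`. Since `r ≤ R`, each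
`B'` meets at most three intervals of `B_R` and is charged at most three times. The first
inequality is just `B̄^a ⊆ B̄^b`.
-/

def gridInterval (R : ℝ) (m : ℤ) : Set ℝ :=
  Icc ((m : ℝ) * R) (((m : ℝ) + 1) * R)

/-- The indices of `B_R^*` when `μ` is supported in `[0,1]`. -/
def gridSupport (μ : Measure ℝ) (R : ℝ) : Finset ℤ :=
  (Finset.Icc (-1) ⌈1 / R⌉).filter fun m => 0 < μ (gridInterval R m)

lemma enlarge_subset_enlarge {a b s t : ℝ} (hab : a ≤ b) (hst : s ≤ t) :
    enlarge a s t ⊆ enlarge b s t :=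
  Icc_subset_Icc (by nlinarith) (by nlinarith)

lemma Icc_subset_enlarge {a s t : ℝ} (ha : 0 ≤ a) (hst : s ≤ t) : Icc s t ⊆ enlarge a s t :=
  Icc_subset_Icc (by nlinarith) (by nlinarith)

/-- `[s', t']` lies in `[s, t]` widened by `t' - s'` on each side. -/
lemma enlarge_subset_enlarge_of_mem {a b s t s' t' x : ℝ} (hx : x ∈ Icc s t)
    (hx' : x ∈ Icc s' t') (h : (t' - s') * (2 + b) ≤ (t - s) * a) :
    enlarge b s' t' ⊆ enlarge a s t := by
  obtain ⟨hsx, hxt⟩ := hx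
  obtain ⟨hs'x, hxt'⟩ := hx'
  exact Icc_subset_Icc (by linarith) (by linarith)

lemma iUnion_gridInterval {r : ℝ} (hr : 0 < r) : ⋃ k, gridInterval r k = univ := by
  refine eq_univ_of_forall fun x => mem_iUnion.2 ⟨⌊x / r⌋, ?_, ?_⟩
  · calc (⌊x / r⌋ : ℝ) * r ≤ x / r * r := by gcongr; exact Int.floor_le _
      _ = x := div_mul_cancel₀ x hr.ne'
  · calc x = x / r * r := (div_mul_cancel₀ x hr.ne').symm
      _ ≤ ((⌊x / r⌋ : ℝ) + 1) * r := by gcongr; exact (Int.lt_floor_add_one _).le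

lemma exists_measure_gridInterval_inter_pos (μ : Measure ℝ) {r : ℝ} (hr : 0 < r) {S : Set ℝ}
    (hS : 0 < μ S) : ∃ k, 0 < μ (gridInterval r k ∩ S) := by
  by_contra! h
  have hnull : μ (⋃ k, gridInterval r k ∩ S) = 0 :=
    measure_iUnion_null fun k => nonpos_iff_eq_zero.1 (h k)
  rw [← iUnion_inter, iUnion_gridInterval hr, univ_inter] at hnull
  exact hS.ne' hnull

lemma mem_Icc_floor_of_gridInterval_inter {r R : ℝ} (hR : 0 < R) (hrR : r ≤ R) {k m : ℤ}
    {x : ℝ} (hxk : x ∈ gridInterval r k) (hxm : x ∈ gridInterval R m) :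
    m ∈ Finset.Icc (⌊k * r / R⌋ - 1) (⌊k * r / R⌋ + 1) := by
  obtain ⟨hkx, hxk⟩ := hxk
  obtain ⟨hmx, hxm⟩ := hxm
  have hlow : (k : ℝ) * r / R ≤ m + 1 := by rw [div_le_iff₀ hR]; linarith
  have hupp : (m : ℝ) - 1 ≤ k * r / R := by rw [le_div_iff₀ hR]; nlinarith
  have h₁ : ⌊(k : ℝ) * r / R⌋ ≤ m + 1 := Int.floor_le_iff.2 (by push_cast; linarith)
  have h₂ : m - 1 ≤ ⌊(k : ℝ) * r / R⌋ := Int.le_floor.2 (by push_cast; linarith)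
  rw [Finset.mem_Icc]
  omega

lemma Finset.sum_comp_le_mul_sum {ι κ M : Type*} [DecidableEq κ] [Semiring M] [PartialOrder M]
    [IsOrderedRing M] {s : Finset ι} {t : Finset κ} {K : ι → κ} {g : κ → M} {N : ℕ} (hK : ∀ i ∈ s, K i ∈ t)
    (hfiber : ∀ k ∈ t, ({i ∈ s | K i = k} : Finset ι).card ≤ N) (hg : ∀ k ∈ t, 0 ≤ g k) :
    ∑ i ∈ s, g (K i) ≤ N * ∑ k ∈ t, g k := by
  rw [← Finset.sum_fiberwise_of_maps_to' hK, Finset.mul_sum]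
  refine Finset.sum_le_sum fun k hk => ?_
  rw [Finset.sum_const, nsmul_eq_mul]
  exact mul_le_mul_of_nonneg_right (Nat.mono_cast (hfiber k hk)) (hg k hk)

lemma rpow_measure_toReal_le_of_subset {α : Type*} [MeasurableSpace α] (μ : Measure α)
    [IsFiniteMeasure μ] {q : ℝ} (hq : q ≤ 0) {A B : Set α} (hA : 0 < μ A) (hAB : A ⊆ B) : (μ B).toReal ^ q ≤ (μ A).toReal ^ q :=
  Real.rpow_le_rpow_of_nonpos (ENNReal.toReal_pos hA.ne' (measure_ne_top μ A))
    (ENNReal.toReal_mono (measure_ne_top μ B) (measure_mono hAB)) hq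

lemma mem_gridSupport {μ : Measure ℝ} (hsupp : μ (Icc (0 : ℝ) 1)ᶜ = 0) {R : ℝ} (hR : 0 < R)
    {m : ℤ} : m ∈ gridSupport μ R ↔ 0 < μ (gridInterval R m) := by
  refine ⟨fun hm => (Finset.mem_filter.1 hm).2, fun hpos => Finset.mem_filter.2 ⟨?_, hpos⟩⟩
  rw [← measure_inter_conull hsupp] at hpos
  obtain ⟨x, ⟨hmx, hxm⟩, hx0, hx1⟩ := nonempty_of_measure_ne_zero hpos.ne'
  have hm : (m : ℝ) ≤ 1 / R := by rw [le_div_iff₀ hR]; linarith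
  have hm' : (-1 : ℝ) ≤ m := by nlinarith
  exact Finset.mem_Icc.2 ⟨by exact_mod_cast hm', Int.cast_le.1 (hm.trans (Int.le_ceil _))⟩

lemma gridSum_eq_sum {μ : Measure ℝ} (hsupp : μ (Icc (0 : ℝ) 1)ᶜ = 0) {R : ℝ} (hR : 0 < R)
    (a q : ℝ) : gridSum μ a q R =
    ∑ m ∈ gridSupport μ R, (μ (enlarge a ((m : ℝ) * R) (((m : ℝ) + 1) * R))).toReal ^ q :=
  (tsum_eq_sum fun _ hm => if_neg (mt (mem_gridSupport hsupp hR).2 hm)).trans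
    (Finset.sum_congr rfl fun _ hm => if_pos ((mem_gridSupport hsupp hR).1 hm))

lemma gridSum_le_gridSum_of_le (μ : Measure ℝ) [IsFiniteMeasure μ]
    (hsupp : μ (Icc (0 : ℝ) 1)ᶜ = 0) {a b q R : ℝ} (hq : q ≤ 0) (ha : 0 ≤ a) (hab : a ≤ b)
    (hR : 0 < R) : gridSum μ b q R ≤ gridSum μ a q R := by
  rw [gridSum_eq_sum hsupp hR, gridSum_eq_sum hsupp hR]
  refine Finset.sum_le_sum fun m hm => ?_
  have hst : (m : ℝ) * R ≤ ((m : ℝ) + 1) * R := by linarith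
  have hpos := (mem_gridSupport hsupp hR).1 hm
  exact rpow_measure_toReal_le_of_subset μ hq
    (hpos.trans_le (measure_mono (Icc_subset_enlarge ha hst))) (enlarge_subset_enlarge hab hst)

lemma exists_gridSupport_map (μ : Measure ℝ) (hsupp : μ (Icc (0 : ℝ) 1)ᶜ = 0) {r R : ℝ}
    (hr : 0 < r) (hR : 0 < R) : ∃ K : ℤ → ℤ, ∀ m ∈ gridSupport μ R,
      K m ∈ gridSupport μ r ∧ (gridInterval r (K m) ∩ gridInterval R m).Nonempty := by
  have hchoice : ∀ m, ∃ k, m ∈ gridSupport μ R →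
      0 < μ (gridInterval r k ∩ gridInterval R m) := fun m => by
    by_cases hm : m ∈ gridSupport μ R
    · obtain ⟨k, hk⟩ :=
        exists_measure_gridInterval_inter_pos μ hr ((mem_gridSupport hsupp hR).1 hm)
      exact ⟨k, fun _ => hk⟩
    · exact ⟨0, fun h => absurd h hm⟩
  choose K hK using hchoice
  exact ⟨K, fun m hm => ⟨(mem_gridSupport hsupp hr).2
    ((hK m hm).trans_le (measure_mono inter_subset_left)),
    nonempty_of_measure_ne_zero (hK m hm).ne'⟩⟩

lemma card_fiber_le_three {r R : ℝ} (hR : 0 < R) (hrR : r ≤ R) {s : Finset ℤ} {K : ℤ → ℤ}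
    (hK : ∀ m ∈ s, (gridInterval r (K m) ∩ gridInterval R m).Nonempty) (k : ℤ) :
    ({m ∈ s | K m = k} : Finset ℤ).card ≤ 3 := by
  have hsub : ({m ∈ s | K m = k} : Finset ℤ) ⊆
      Finset.Icc (⌊(k : ℝ) * r / R⌋ - 1) (⌊(k : ℝ) * r / R⌋ + 1) := fun m hm => by
    obtain ⟨hms, rfl⟩ := Finset.mem_filter.1 hm
    obtain ⟨x, hxk, hxm⟩ := hK m hms
    exact mem_Icc_floor_of_gridInterval_inter hR hrR hxk hxm
  calc _ ≤ _ := Finset.card_le_card hsub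
    _ = 3 := by rw [Int.card_Icc]; omega

lemma gridSum_le_three_mul_gridSum (μ : Measure ℝ) [IsFiniteMeasure μ]
    (hsupp : μ (Icc (0 : ℝ) 1)ᶜ = 0) {a b q R r : ℝ} (hq : q ≤ 0) (hb : 0 ≤ b) (hr : 0 < r)
    (hrR : r ≤ R) (hrab : r * (2 + b) ≤ R * a) : gridSum μ a q R ≤ 3 * gridSum μ b q r := by
  have hR := hr.trans_le hrR
  obtain ⟨K, hK⟩ := exists_gridSupport_map μ hsupp hr hR
  set f : ℤ → ℝ := fun k => (μ (enlarge b ((k : ℝ) * r) (((k : ℝ) + 1) * r))).toReal ^ q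
  rw [gridSum_eq_sum hsupp hR, gridSum_eq_sum hsupp hr]
  calc _ ≤ ∑ m ∈ gridSupport μ R, f (K m) := by
        refine Finset.sum_le_sum fun m hm => ?_
        obtain ⟨hKm, x, hxk, hxm⟩ := hK m hm
        have hst : (K m : ℝ) * r ≤ ((K m : ℝ) + 1) * r := by linarith
        exact rpow_measure_toReal_le_of_subset μ hq
          (((mem_gridSupport hsupp hr).1 hKm).trans_le (measure_mono (Icc_subset_enlarge hb hst)))
          (enlarge_subset_enlarge_of_mem hxm hxk (by linarith))
    _ ≤ ((3 : ℕ) : ℝ) * ∑ k ∈ gridSupport μ r, f k :=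
      Finset.sum_comp_le_mul_sum (fun m hm => (hK m hm).1)
        (fun k _ => card_fiber_le_three hR hrR (fun m hm => (hK m hm).2) k)
        fun _ _ => Real.rpow_nonneg ENNReal.toReal_nonneg q
    _ = _ := by norm_num [f]

theorem stmt_4_general (μ : Measure ℝ) [IsProbabilityMeasure μ]
    (hsupp : μ (Set.Icc (0 : ℝ) 1)ᶜ = 0)
    (q a b : ℝ) (hq : q < 0) (ha : 0 < a) (hab : a ≤ b) :
    ∃ c₂ r₀ : ℝ, 0 < c₂ ∧ 0 < r₀ ∧ ∀ R : ℝ, 0 < R → R ≤ r₀ →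
      gridSum μ b q R ≤ gridSum μ a q R ∧
      gridSum μ a q R ≤ c₂ * gridSum μ b q (R * a / (2 + b)) := by
  refine ⟨3, 1, three_pos, one_pos, fun R hR _ => ⟨?_, ?_⟩⟩
  · exact gridSum_le_gridSum_of_le μ hsupp hq.le ha.le hab hR
  · have h2b : 0 < 2 + b := by linarith
    refine gridSum_le_three_mul_gridSum μ hsupp hq.le (by linarith) (by positivity) ?_ ?_
    · rw [div_le_iff₀ h2b]
      nlinarith
    · rw [div_mul_cancel₀ _ h2b.ne']

/-- for `q < 0` and `0 < a ≤ b` the enlarged grid moment sums for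
parameters `a` and `b` are comparable, after rescaling the grid by `a/(2+b)`. -/
theorem stmt_4 (μ : Measure ℝ) [IsProbabilityMeasure μ] [NullSingletonClass μ]
    (hsupp : μ (Set.Icc (0 : ℝ) 1)ᶜ = 0)
    (q a b : ℝ) (hq : q < 0) (ha : 0 < a) (hab : a ≤ b) :
    ∃ c₂ r₀ : ℝ, 0 < c₂ ∧ 0 < r₀ ∧ ∀ R : ℝ, 0 < R → R ≤ r₀ →
      gridSum μ b q R ≤ gridSum μ a q R ∧
      gridSum μ a q R ≤ c₂ * gridSum μ b q (R * a / (2 + b)) :=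
  stmt_4_general μ hsupp q a b hq ha hab
end
end

section
/- Let μ be a non-atomic Borel probability measure on [0,1]. For every q ∈ ℝ and all a, b > 0, β_a(q) = β_b(q); that is, the multifractal moment function β_a(q) := inf{ β ∈ ℝ : limsup_{r→0⁺} r^β Σ_{B ∈ B_r^*} μ(B̄^a)^q = 0 } does not depend on the value of the enlargement parameter a > 0. -/
open MeasureTheory Filter Set
open scoped Classical

noncomputable section

open Topology

/-! For `q ≥ 0` the enlargement `B̄^d` of a grid interval is covered by a bounded number of
neighbouring grid intervals, each contained in its own `B̄^c`, so the sum for `d` is at most a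
constant times the sum for `c`. For `q < 0` a grid interval of positive mass at scale `k r`
contains a subinterval of positive mass at scale `r` whose `d`-enlargement lies in the
`c`-enlargement of the big one once `d ≤ k c`; this bounds the sum for `c` at scale `k r` by `k`
times the sum for `d` at scale `r`. Either comparison preserves `r^β Σ → 0`. -/

lemma rpow_sum_le_card_rpow_mul_sum_rpow {ι : Type*} {s : Finset ι} {q : ℝ} (hs : s.Nonempty)
    {f : ι → ℝ} (hf : ∀ i ∈ s, 0 ≤ f i) (hq : 0 ≤ q) :
    (∑ i ∈ s, f i) ^ q ≤ (s.card : ℝ) ^ q * ∑ i ∈ s, f i ^ q := by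
  obtain ⟨j, hj, hmax⟩ := s.exists_max_image f hs
  calc (∑ i ∈ s, f i) ^ q ≤ (s.card * f j) ^ q := by
        gcongr
        · exact Finset.sum_nonneg hf
        · simpa using Finset.sum_le_card_nsmul s f (f j) hmax
    _ = (s.card : ℝ) ^ q * f j ^ q := Real.mul_rpow (Nat.cast_nonneg _) (hf j hj)
    _ ≤ (s.card : ℝ) ^ q * ∑ i ∈ s, f i ^ q := by
        gcongr
        exact Finset.single_le_sum (fun i hi => Real.rpow_nonneg (hf i hi) q) hj

def gridIcc (R : ℝ) (m : ℤ) : Set ℝ := Icc (m * R) ((m + 1) * R)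

-- The `m`-th summand of `gridSum`: `gridSum μ a q R = ∑' m, gridTerm μ a q R m` holds by `rfl`.
def gridTerm (μ : Measure ℝ) (a q R : ℝ) (m : ℤ) : ℝ :=
  if 0 < μ (gridIcc R m) then (μ (enlarge a (m * R) ((m + 1) * R))).toReal ^ q else 0

section Grid

variable {μ : Measure ℝ} {a c d q r R : ℝ}

lemma gridTerm_nonneg (m : ℤ) : 0 ≤ gridTerm μ a q R m := by
  unfold gridTerm
  split_ifs
  exacts [Real.rpow_nonneg ENNReal.toReal_nonneg q, le_rfl]

lemma gridSum_nonneg : 0 ≤ gridSum μ a q R :=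
  tsum_nonneg gridTerm_nonneg

lemma gridIcc_subset_enlarge (ha : 0 ≤ a) (hR : 0 ≤ R) (m : ℤ) :
    gridIcc R m ⊆ enlarge a (m * R) ((m + 1) * R) := by
  unfold gridIcc enlarge
  apply Icc_subset_Icc <;> nlinarith

lemma Icc_subset_biUnion_gridIcc (hR : 0 ≤ R) (m : ℤ) {n : ℕ} (hn : 1 ≤ n) :
    Icc (m * R) ((m + n) * R) ⊆ ⋃ i ∈ Finset.range n, gridIcc R (m + i) := by
  induction n, hn using Nat.le_induction with
  | base => simp [gridIcc]
  | succ n hn ih =>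
    have hsplit : Icc (m * R) ((m + (n + 1 : ℕ)) * R) =
        Icc (m * R) ((m + n) * R) ∪ gridIcc R (m + n) := by
      unfold gridIcc
      push_cast
      rw [← add_assoc, Icc_union_Icc_eq_Icc] <;> nlinarith [(n.cast_nonneg : (0 : ℝ) ≤ n)]
    rw [hsplit, Finset.range_add_one, Finset.set_biUnion_insert]
    exact union_subset (ih.trans subset_union_right) subset_union_left

lemma gridIcc_subset_compl_of_notMem (hR : 0 < R) {m : ℤ} (hm : m ∉ Finset.Icc (-1) ⌊1 / R⌋) :
    gridIcc R m ⊆ (Icc 0 1)ᶜ := by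
  rintro x ⟨hxl, hxu⟩ ⟨hx0, hx1⟩
  refine hm (Finset.mem_Icc.2 ⟨?_, Int.le_floor.2 ?_⟩)
  · have : (-1 : ℝ) ≤ m := by nlinarith
    exact_mod_cast this
  · rw [le_div_iff₀ hR]
    linarith

lemma summable_gridTerm (hsupp : μ (Icc 0 1)ᶜ = 0) (hR : 0 < R) : Summable (gridTerm μ a q R) :=
  summable_of_ne_finset_zero fun _ hm => by
    rw [gridTerm, if_neg (measure_mono_null (gridIcc_subset_compl_of_notMem hR hm) hsupp).not_gt]

lemma enlarge_gridIcc_subset_biUnion (hR : 0 ≤ R) {K : ℕ} (hK : d ≤ 2 * K) (m : ℤ) :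
    enlarge d (m * R) ((m + 1) * R) ⊆
      ⋃ i ∈ Finset.range (2 * K + 1), gridIcc R (m - K + i) := by
  refine Subset.trans ?_ (Icc_subset_biUnion_gridIcc hR (m - K) (by omega))
  unfold enlarge
  push_cast
  apply Icc_subset_Icc <;> nlinarith

lemma gridTerm_le_sum_gridTerm_of_nonneg [IsFiniteMeasure μ] (hc : 0 ≤ c) (hR : 0 ≤ R)
    {K : ℕ} (hK : d ≤ 2 * K) (hq : 0 ≤ q) (m : ℤ) :
    gridTerm μ d q R m ≤
      ((2 * K + 1 : ℕ) : ℝ) ^ q * ∑ i ∈ Finset.range (2 * K + 1), gridTerm μ c q R (m - K + i) := by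
  set N := 2 * K + 1
  set j : ℕ → ℤ := fun i => m - K + i
  by_cases hm : 0 < μ (gridIcc R m)
  swap
  · rw [gridTerm, if_neg hm]
    exact mul_nonneg (by positivity) (Finset.sum_nonneg fun i _ => gridTerm_nonneg _)
  -- Zero-mass neighbours have `gridTerm = 0` even when `q = 0`, so they are dropped first.
  set J := (Finset.range N).filter fun i => 0 < μ (gridIcc R (j i))
  have hJ : J.Nonempty := ⟨K, Finset.mem_filter.2 ⟨Finset.mem_range.2 (by omega), by simpa [j]⟩⟩
  have hcover : μ (enlarge d (m * R) ((m + 1) * R)) ≤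
      ∑ i ∈ J, μ (enlarge c (j i * R) ((j i + 1) * R)) :=
    calc μ (enlarge d (m * R) ((m + 1) * R))
        ≤ ∑ i ∈ Finset.range N, μ (gridIcc R (j i)) :=
          (measure_mono (enlarge_gridIcc_subset_biUnion hR hK m)).trans
            (measure_biUnion_finset_le _ _)
      _ = ∑ i ∈ J, μ (gridIcc R (j i)) :=
          (Finset.sum_filter_of_ne fun _ _ h => pos_iff_ne_zero.2 h).symm
      _ ≤ _ := Finset.sum_le_sum fun i _ => measure_mono (gridIcc_subset_enlarge hc hR (j i))
  have hcoverReal : (μ (enlarge d (m * R) ((m + 1) * R))).toReal ≤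
      ∑ i ∈ J, (μ (enlarge c (j i * R) ((j i + 1) * R))).toReal := by
    rw [← ENNReal.toReal_sum fun _ _ => measure_ne_top _ _]
    exact ENNReal.toReal_mono (ENNReal.sum_ne_top.2 fun _ _ => measure_ne_top _ _) hcover
  calc gridTerm μ d q R m = (μ (enlarge d (m * R) ((m + 1) * R))).toReal ^ q := if_pos hm
    _ ≤ (∑ i ∈ J, (μ (enlarge c (j i * R) ((j i + 1) * R))).toReal) ^ q := by gcongr
    _ ≤ (J.card : ℝ) ^ q * ∑ i ∈ J, (μ (enlarge c (j i * R) ((j i + 1) * R))).toReal ^ q :=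
        rpow_sum_le_card_rpow_mul_sum_rpow hJ (fun _ _ => ENNReal.toReal_nonneg) hq
    _ = (J.card : ℝ) ^ q * ∑ i ∈ Finset.range N, gridTerm μ c q R (j i) := by
        rw [Finset.sum_filter]
        rfl
    _ ≤ (N : ℝ) ^ q * ∑ i ∈ Finset.range N, gridTerm μ c q R (j i) := by
        gcongr
        · exact Finset.sum_nonneg fun _ _ => gridTerm_nonneg _
        · simpa using Finset.card_filter_le (Finset.range N) fun i => 0 < μ (gridIcc R (j i))

lemma tsum_gridTerm_add (t : ℤ) : ∑' m : ℤ, gridTerm μ a q R (m + t) = gridSum μ a q R :=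
  (Equiv.addRight t).tsum_eq (gridTerm μ a q R)

lemma gridSum_le_of_nonneg [IsFiniteMeasure μ] (hsupp : μ (Icc 0 1)ᶜ = 0) (hc : 0 ≤ c)
    (hR : 0 < R) {K : ℕ} (hK : d ≤ 2 * K) (hq : 0 ≤ q) :
    gridSum μ d q R ≤ ((2 * K + 1 : ℕ) : ℝ) ^ q * (2 * K + 1 : ℕ) * gridSum μ c q R := by
  set N := 2 * K + 1
  have hshift (t : ℤ) : Summable fun m : ℤ => gridTerm μ c q R (m + t) :=
    (summable_gridTerm hsupp hR).comp_injective (add_left_injective t)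
  have hterm (m : ℤ) : gridTerm μ d q R m ≤
      (N : ℝ) ^ q * ∑ i ∈ Finset.range N, gridTerm μ c q R (m + (i - K)) := by
    simpa only [sub_add_eq_add_sub, add_sub_assoc] using
      gridTerm_le_sum_gridTerm_of_nonneg hc hR.le hK hq m
  calc gridSum μ d q R
      ≤ ∑' m : ℤ, (N : ℝ) ^ q * ∑ i ∈ Finset.range N, gridTerm μ c q R (m + (i - K)) :=
        Summable.tsum_le_tsum hterm (summable_gridTerm hsupp hR)
          ((summable_sum fun i _ => hshift _).mul_left _)
    _ = (N : ℝ) ^ q * ∑ i ∈ Finset.range N, gridSum μ c q R := by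
        rw [tsum_mul_left, Summable.tsum_finsetSum fun i _ => hshift _]
        simp only [tsum_gridTerm_add]
    _ = _ := by rw [Finset.sum_const, Finset.card_range, nsmul_eq_mul, mul_assoc]

lemma gridIcc_subset_biUnion_refine (hr : 0 ≤ r) {k : ℕ} (hk : 1 ≤ k) (m : ℤ) :
    gridIcc (k * r) m ⊆ ⋃ i ∈ Finset.range k, gridIcc r (k * m + i) := by
  convert Icc_subset_biUnion_gridIcc hr (k * m) hk using 1
  unfold gridIcc
  push_cast
  congr 1 <;> ring

lemma exists_pos_measure_gridIcc_refine (hr : 0 ≤ r) {k : ℕ} (hk : 1 ≤ k) {m : ℤ}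
    (hm : 0 < μ (gridIcc (k * r) m)) : ∃ i ∈ Finset.range k, 0 < μ (gridIcc r (k * m + i)) := by
  by_contra! h
  refine hm.ne' (measure_mono_null (gridIcc_subset_biUnion_refine hr hk m) ?_)
  exact (measure_biUnion_null_iff (Finset.countable_toSet _)).2 fun i hi =>
    nonpos_iff_eq_zero.1 (h i hi)

lemma enlarge_refine_subset (hr : 0 ≤ r) {k : ℕ} (hdk : d ≤ k * c) {i : ℕ} (hi : i < k) (m : ℤ) :
    enlarge d (((k * m + i : ℤ) : ℝ) * r) ((((k * m + i : ℤ) : ℝ) + 1) * r) ⊆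
      enlarge c (m * (k * r)) ((m + 1) * (k * r)) := by
  have hi' : (i : ℝ) + 1 ≤ k := by exact_mod_cast hi
  unfold enlarge
  push_cast
  apply Icc_subset_Icc <;> nlinarith [(i.cast_nonneg : (0 : ℝ) ≤ i)]

lemma gridTerm_le_sum_gridTerm_of_nonpos [IsFiniteMeasure μ] (hd : 0 ≤ d) (hr : 0 ≤ r) {k : ℕ}
    (hk : 1 ≤ k) (hdk : d ≤ k * c) (hq : q ≤ 0) (m : ℤ) :
    gridTerm μ c q (k * r) m ≤ ∑ i ∈ Finset.range k, gridTerm μ d q r (k * m + i) := by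
  by_cases hm : 0 < μ (gridIcc (k * r) m)
  swap
  · rw [gridTerm, if_neg hm]
    exact Finset.sum_nonneg fun _ _ => gridTerm_nonneg _
  obtain ⟨i, hi, hpos⟩ := exists_pos_measure_gridIcc_refine hr hk hm
  set j : ℤ := k * m + i
  have hj : 0 < (μ (enlarge d (j * r) ((j + 1) * r))).toReal :=
    ENNReal.toReal_pos (hpos.trans_le (measure_mono (gridIcc_subset_enlarge hd hr j))).ne'
      (measure_ne_top _ _)
  calc gridTerm μ c q (k * r) m
      = (μ (enlarge c (m * (k * r)) ((m + 1) * (k * r)))).toReal ^ q := if_pos hm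
    _ ≤ (μ (enlarge d (j * r) ((j + 1) * r))).toReal ^ q :=
        Real.rpow_le_rpow_of_nonpos hj (ENNReal.toReal_mono (measure_ne_top _ _)
          (measure_mono (enlarge_refine_subset hr hdk (Finset.mem_range.1 hi) m))) hq
    _ = gridTerm μ d q r j := (if_pos hpos).symm
    _ ≤ _ := Finset.single_le_sum (f := fun i : ℕ => gridTerm μ d q r (k * m + i))
        (fun _ _ => gridTerm_nonneg _) hi

lemma gridSum_le_of_nonpos [IsFiniteMeasure μ] (hsupp : μ (Icc 0 1)ᶜ = 0) (hd : 0 ≤ d)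
    (hr : 0 < r) {k : ℕ} (hk : 1 ≤ k) (hdk : d ≤ k * c) (hq : q ≤ 0) :
    gridSum μ c q (k * r) ≤ k * gridSum μ d q r := by
  have hinj (i : ℕ) : Function.Injective fun m : ℤ => (k : ℤ) * m + i := fun m n h =>
    mul_left_cancel₀ (by positivity : (k : ℤ) ≠ 0) (add_right_cancel h)
  have hsum (i : ℕ) : Summable fun m : ℤ => gridTerm μ d q r (k * m + i) :=
    (summable_gridTerm hsupp hr).comp_injective (hinj i)
  calc gridSum μ c q (k * r)
      ≤ ∑' m : ℤ, ∑ i ∈ Finset.range k, gridTerm μ d q r (k * m + i) :=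
        Summable.tsum_le_tsum (gridTerm_le_sum_gridTerm_of_nonpos hd hr.le hk hdk hq)
          (summable_gridTerm hsupp (mul_pos (by exact_mod_cast hk) hr))
          (summable_sum fun i _ => hsum i)
    _ = ∑ i ∈ Finset.range k, ∑' m : ℤ, gridTerm μ d q r (k * m + i) :=
        Summable.tsum_finsetSum fun i _ => hsum i
    _ ≤ ∑ i ∈ Finset.range k, gridSum μ d q r := Finset.sum_le_sum fun i _ =>
        tsum_comp_le_tsum_of_inj (summable_gridTerm hsupp hr) gridTerm_nonneg (hinj i)
    _ = k * gridSum μ d q r := by rw [Finset.sum_const, Finset.card_range, nsmul_eq_mul]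

lemma exists_gridSum_le_mul_gridSum [IsFiniteMeasure μ] (hsupp : μ (Icc 0 1)ᶜ = 0)
    (hc : 0 < c) (hd : 0 < d) (q : ℝ) :
    ∃ C k : ℝ, 0 < k ∧ ∀ r > 0, gridSum μ d q (k * r) ≤ C * gridSum μ c q r := by
  rcases le_or_gt 0 q with hq | hq
  · set K := ⌈d⌉₊
    refine ⟨((2 * K + 1 : ℕ) : ℝ) ^ q * (2 * K + 1 : ℕ), 1, one_pos, fun r hr => ?_⟩
    rw [one_mul]
    refine gridSum_le_of_nonneg hsupp hc.le hr ?_ hq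
    linarith [Nat.le_ceil d, (Nat.cast_nonneg ⌈d⌉₊ : (0 : ℝ) ≤ ⌈d⌉₊)]
  · have hk : 0 < ⌈c / d⌉₊ := Nat.ceil_pos.2 (div_pos hc hd)
    refine ⟨_, _, by exact_mod_cast hk, fun r hr => gridSum_le_of_nonpos hsupp hc.le hr hk ?_ hq.le⟩
    rw [← div_le_iff₀ hd]
    exact Nat.le_ceil _

end Grid

lemma tendsto_rpow_mul_of_le_mul_comp {f g : ℝ → ℝ} {β C k : ℝ} (hk : 0 < k)
    (hg : ∀ R > 0, 0 ≤ g R) (hgf : ∀ r > 0, g (k * r) ≤ C * f r)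
    (hf : Tendsto (fun R => R ^ β * f R) (𝓝[>] 0) (𝓝 0)) :
    Tendsto (fun R => R ^ β * g R) (𝓝[>] 0) (𝓝 0) := by
  have hdiv : Tendsto (fun R => k⁻¹ * R) (𝓝[>] 0) (𝓝[>] 0) := by
    simpa using TendstoNhdsWithinIoi.const_mul (inv_pos.2 hk) (tendsto_id (x := 𝓝[>] (0 : ℝ)))
  have hlim := (hf.comp hdiv).const_mul (C * k ^ β)
  rw [mul_zero] at hlim
  refine squeeze_zero' ?_ ?_ hlim
  · filter_upwards [self_mem_nhdsWithin] with R (hR : 0 < R)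
    exact mul_nonneg (Real.rpow_nonneg hR.le _) (hg R hR)
  · filter_upwards [self_mem_nhdsWithin] with R (hR : 0 < R)
    have hR' : k * (k⁻¹ * R) = R := by field_simp
    calc R ^ β * g R = (k * (k⁻¹ * R)) ^ β * g (k * (k⁻¹ * R)) := by rw [hR']
      _ ≤ (k * (k⁻¹ * R)) ^ β * (C * f (k⁻¹ * R)) := by
          gcongr
          exact hgf _ (by positivity)
      _ = _ := by
          rw [Real.mul_rpow hk.le (by positivity), Function.comp_apply]
          ring

theorem stmt_5_general (μ : Measure ℝ) [IsProbabilityMeasure μ]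
    (hsupp : μ (Set.Icc (0 : ℝ) 1)ᶜ = 0)
    (q a b : ℝ) (ha : 0 < a) (hb : 0 < b) :
    betaA μ a q = betaA μ b q := by
  have hsubset {c d : ℝ} (hc : 0 < c) (hd : 0 < d) :
      {β : ℝ | Tendsto (fun R => R ^ β * gridSum μ c q R) (𝓝[>] 0) (𝓝 0)} ⊆
        {β : ℝ | Tendsto (fun R => R ^ β * gridSum μ d q R) (𝓝[>] 0) (𝓝 0)} := fun β hβ => by
    obtain ⟨C, k, hk, hle⟩ := exists_gridSum_le_mul_gridSum hsupp hc hd q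
    exact tendsto_rpow_mul_of_le_mul_comp hk (fun _ _ => gridSum_nonneg) hle hβ
  exact congrArg sInf ((hsubset ha hb).antisymm (hsubset hb ha))

/-- the multifractal moment function `β_a(q)` is independent of the
enlargement parameter `a > 0`, for every `q ∈ ℝ`. -/
theorem stmt_5 (μ : Measure ℝ) [IsProbabilityMeasure μ] [NullSingletonClass μ]
    (hsupp : μ (Set.Icc (0 : ℝ) 1)ᶜ = 0)
    (q a b : ℝ) (ha : 0 < a) (hb : 0 < b) :
    betaA μ a q = betaA μ b q :=
  stmt_5_general μ hsupp q a b ha hb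
end
end
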